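/- arXiv:2506.02304 — 5 statements merged into one kernel-verified Lean document; each statement's English description precedes it below -/
import Mathlib

section
/- Let R be a commutative discrete valuation ring with uniformizer p and let n, m, ℓ be positive integers with n < min(m, ℓ). Consider a short exact sequence 0 → R/P^ℓ → E → R/P^m → 0 of R-modules whose class in Ext¹_R(R/P^m, R/P^ℓ) ≅ R/P^{min(m,ℓ)} lies in the submodule P^n·Ext¹_R(R/P^m, R/P^ℓ). Then the functor Hom_R(−, R/P^n) applied to this short exact sequence yields a short exact sequence of abelian groups. -/
open CategoryTheory CategoryTheory.Abelian

universe w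

/-!
The sequence `0 → Hom(R/P^m, N) → Hom(E, N) → Hom(R/P^ℓ, N)` with `N = R/P^n` is always exact,
and by the long exact `Ext` sequence the last map is onto exactly when the connecting map
`ψ ↦ η ∘ ψ` into `Ext¹(R/P^m, N)` vanishes, `η` being the class of the extension. Writing `η` as
a sum of classes `z ∘ (r • 1)` with `r ∈ P^n`, each `z ∘ (r • ψ)` vanishes because `P^n` kills `N`.
-/

lemma ModuleCat.smul_hom_to_quotient_eq_zero {R : Type*} [CommRing R] {I : Ideal R}
    {M : ModuleCat R} {r : R} (hr : r ∈ I) (χ : M ⟶ ModuleCat.of R (R ⧸ I)) : r • χ = 0 := by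
  ext a
  obtain ⟨b, hb⟩ := Ideal.Quotient.mk_surjective (χ.hom a)
  change r • χ.hom a = 0
  rw [← hb, Algebra.smul_def, Ideal.Quotient.algebraMap_eq, ← map_mul,
    Ideal.Quotient.eq_zero_iff_mem]
  exact I.mul_mem_right b hr

namespace CategoryTheory

variable {C : Type*} [Category C] [Abelian C]

namespace ShortComplex.ShortExact

variable {S : ShortComplex C} {Y : C}

lemma precomp_g_injective (hS : S.ShortExact) :
    Function.Injective (fun φ : S.X₃ ⟶ Y => S.g ≫ φ) :=
  have := hS.epi_g
  fun _ _ h => (cancel_epi S.g).1 h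

lemma exact_precomp (hS : S.ShortExact) :
    Function.Exact (fun φ : S.X₃ ⟶ Y => S.g ≫ φ) (fun φ : S.X₂ ⟶ Y => S.f ≫ φ) := by
  have := hS.epi_g
  intro φ
  constructor
  · intro hφ
    obtain ⟨ψ, hψ⟩ := Limits.CokernelCofork.IsColimit.desc' hS.exact.gIsCokernel φ hφ
    exact ⟨ψ, hψ⟩
  · rintro ⟨ψ, rfl⟩
    simp

lemma exists_f_comp_eq_of_extClass_comp_eq_zero [HasExt.{w} C] (hS : S.ShortExact)
    (ψ : S.X₁ ⟶ Y) (h : hS.extClass.comp (Ext.mk₀ ψ) (add_zero 1) = 0) :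
    ∃ Φ : S.X₂ ⟶ Y, S.f ≫ Φ = ψ := by
  obtain ⟨x₂, hx₂⟩ := Ext.contravariant_sequence_exact₁ hS Y (Ext.mk₀ ψ) (add_zero 1) h
  obtain ⟨Φ, rfl⟩ := (Ext.mk₀_bijective S.X₂ Y).2 x₂
  rw [Ext.mk₀_comp_mk₀] at hx₂
  exact ⟨Φ, (Ext.mk₀_bijective S.X₁ Y).1 hx₂⟩

end ShortComplex.ShortExact

namespace Abelian.Ext

variable [HasExt.{w} C]

lemma comp_mk₀_eq_zero_of_mem_closure {R : Type*} [Ring R] [Linear R C] {I : Ideal R}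
    {X Y Z : C} {n : ℕ} {x : Ext X Y n}
    (hx : x ∈ AddSubgroup.closure
      {y | ∃ r ∈ I, ∃ z : Ext X Y n, y = z.comp (mk₀ (r • 𝟙 Y)) (add_zero n)})
    (χ : Y ⟶ Z) (hχ : ∀ r ∈ I, r • χ = 0) :
    x.comp (mk₀ χ) (add_zero n) = 0 := by
  let post := Ext.postcomp (mk₀ χ) X (add_zero n)
  suffices AddSubgroup.closure _ ≤ post.ker from this hx
  rw [AddSubgroup.closure_le]
  rintro _ ⟨r, hr, z, rfl⟩
  change (z.comp _ (add_zero n)).comp _ (add_zero n) = 0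
  rw [comp_assoc_of_third_deg_zero, mk₀_comp_mk₀, Linear.smul_comp, Category.id_comp, hχ r hr,
    mk₀_zero, comp_zero]

lemma comp_mk₀_eq_zero_iff_of_iso {X X' Y Y' Z : C} {n : ℕ} (e₃ : X ≅ X') (e₁ : Y ≅ Y')
    (x : Ext X Y n) (ψ : Y ⟶ Z) :
    ((mk₀ e₃.inv).comp (x.comp (mk₀ e₁.hom) (add_zero n)) (zero_add n)).comp
      (mk₀ (e₁.inv ≫ ψ)) (add_zero n) = 0 ↔ x.comp (mk₀ ψ) (add_zero n) = 0 := by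
  rw [comp_assoc_of_third_deg_zero, comp_assoc_of_third_deg_zero, mk₀_comp_mk₀,
    Iso.hom_inv_id_assoc]
  constructor
  · intro h
    simpa using congrArg (fun t => (mk₀ e₃.hom).comp t (zero_add n)) h
  · intro h
    rw [h, comp_zero]

end Abelian.Ext

end CategoryTheory

theorem hom_exact_of_extClass_in_radical_general
    (R : Type) [CommRing R] [IsDomain R] [IsDiscreteValuationRing R]
    [HasExt.{w} (ModuleCat.{0} R)]
    (n m ℓ : ℕ)
    (S : ShortComplex (ModuleCat.{0} R)) (hS : S.ShortExact)
    (e₁ : S.X₁ ≅ ModuleCat.of R (R ⧸ (IsLocalRing.maximalIdeal R ^ ℓ)))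
    (e₃ : S.X₃ ≅ ModuleCat.of R (R ⧸ (IsLocalRing.maximalIdeal R ^ m)))
    -- the transported extension class of `S` lies in `P^n · Ext¹(R/P^m, R/P^ℓ)` :
    (hclass :
      ((Ext.mk₀ e₃.inv).comp (hS.extClass.comp (Ext.mk₀ e₁.hom) (add_zero 1)) (zero_add 1))
        ∈ AddSubgroup.closure
            {y : Ext (ModuleCat.of R (R ⧸ (IsLocalRing.maximalIdeal R ^ m)))
                   (ModuleCat.of R (R ⧸ (IsLocalRing.maximalIdeal R ^ ℓ))) 1 |
              ∃ r ∈ (IsLocalRing.maximalIdeal R) ^ n,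
              ∃ z : Ext (ModuleCat.of R (R ⧸ (IsLocalRing.maximalIdeal R ^ m)))
                      (ModuleCat.of R (R ⧸ (IsLocalRing.maximalIdeal R ^ ℓ))) 1,
                y = z.comp
                  (Ext.mk₀ (r • 𝟙 (ModuleCat.of R (R ⧸ (IsLocalRing.maximalIdeal R ^ ℓ)))))
                  (add_zero 1)}) :
    Function.Injective
        (fun φ : S.X₃ ⟶ ModuleCat.of R (R ⧸ (IsLocalRing.maximalIdeal R ^ n)) => S.g ≫ φ) ∧
    Function.Exact
        (fun φ : S.X₃ ⟶ ModuleCat.of R (R ⧸ (IsLocalRing.maximalIdeal R ^ n)) => S.g ≫ φ)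
        (fun φ : S.X₂ ⟶ ModuleCat.of R (R ⧸ (IsLocalRing.maximalIdeal R ^ n)) => S.f ≫ φ) ∧
    Function.Surjective
        (fun φ : S.X₂ ⟶ ModuleCat.of R (R ⧸ (IsLocalRing.maximalIdeal R ^ n)) => S.f ≫ φ) := by
  refine ⟨hS.precomp_g_injective, hS.exact_precomp, fun ψ =>
    hS.exists_f_comp_eq_of_extClass_comp_eq_zero ψ ?_⟩
  rw [← Ext.comp_mk₀_eq_zero_iff_of_iso e₃ e₁]
  exact Ext.comp_mk₀_eq_zero_of_mem_closure hclass _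
    fun r hr => ModuleCat.smul_hom_to_quotient_eq_zero hr _

/-- Let `R` be a commutative DVR with uniformizer `p` and `n < min m ℓ`.  If a short exact
sequence `0 → R/P^ℓ → E → R/P^m → 0` has extension class lying in the submodule
`P^n · Ext¹_R(R/P^m, R/P^ℓ)`, then `Hom_R(−, R/P^n)` applied to it yields a short exact
sequence of abelian groups. -/
theorem hom_exact_of_extClass_in_radical
    (R : Type) [CommRing R] [IsDomain R] [IsDiscreteValuationRing R]
    (p : R) (hp : IsLocalRing.maximalIdeal R = Ideal.span {p})
    [HasExt.{w} (ModuleCat.{0} R)]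
    (n m ℓ : ℕ) (hn : 0 < n) (hmin : n < min m ℓ)
    (S : ShortComplex (ModuleCat.{0} R)) (hS : S.ShortExact)
    (e₁ : S.X₁ ≅ ModuleCat.of R (R ⧸ (IsLocalRing.maximalIdeal R ^ ℓ)))
    (e₃ : S.X₃ ≅ ModuleCat.of R (R ⧸ (IsLocalRing.maximalIdeal R ^ m)))
    -- the transported extension class of `S` lies in `P^n · Ext¹(R/P^m, R/P^ℓ)` :
    (hclass :
      ((Ext.mk₀ e₃.inv).comp (hS.extClass.comp (Ext.mk₀ e₁.hom) (add_zero 1)) (zero_add 1))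
        ∈ AddSubgroup.closure
            {y : Ext (ModuleCat.of R (R ⧸ (IsLocalRing.maximalIdeal R ^ m)))
                   (ModuleCat.of R (R ⧸ (IsLocalRing.maximalIdeal R ^ ℓ))) 1 |
              ∃ r ∈ (IsLocalRing.maximalIdeal R) ^ n,
              ∃ z : Ext (ModuleCat.of R (R ⧸ (IsLocalRing.maximalIdeal R ^ m)))
                      (ModuleCat.of R (R ⧸ (IsLocalRing.maximalIdeal R ^ ℓ))) 1,
                y = z.comp
                  (Ext.mk₀ (r • 𝟙 (ModuleCat.of R (R ⧸ (IsLocalRing.maximalIdeal R ^ ℓ)))))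
                  (add_zero 1)}) :
    Function.Injective
        (fun φ : S.X₃ ⟶ ModuleCat.of R (R ⧸ (IsLocalRing.maximalIdeal R ^ n)) => S.g ≫ φ) ∧
    Function.Exact
        (fun φ : S.X₃ ⟶ ModuleCat.of R (R ⧸ (IsLocalRing.maximalIdeal R ^ n)) => S.g ≫ φ)
        (fun φ : S.X₂ ⟶ ModuleCat.of R (R ⧸ (IsLocalRing.maximalIdeal R ^ n)) => S.f ≫ φ) ∧
    Function.Surjective
        (fun φ : S.X₂ ⟶ ModuleCat.of R (R ⧸ (IsLocalRing.maximalIdeal R ^ n)) => S.f ≫ φ) :=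
  hom_exact_of_extClass_in_radical_general R n m ℓ S hS e₁ e₃ hclass
end

section
/- Let A be an abelian category with a hereditary torsion pair (T, F) and torsion radical functor t. Define a short exact sequence 0 → X → Y → Z → 0 of A to be in S_t if 0 → t(X) → t(Y) → t(Z) → 0 is also short exact. Then S_t is closed under pullbacks along arbitrary morphisms into the third term and under pushouts along arbitrary morphisms out of the first term, and hence forms an exact structure on A. -/
open CategoryTheory CategoryTheory.Limits

universe v u

/-- A torsion pair `(T, F)` on an abelian category `A`, given with its torsion radical
functor `t` and the natural inclusion `t ⟶ 𝟭 A`. -/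
structure TorsionPairData (A : Type u) [Category.{v} A] [Abelian A] where
  T : A → Prop
  F : A → Prop
  t : A ⥤ A
  additive : t.Additive
  ι : t ⟶ Functor.id A
  mono : ∀ X : A, Mono (ι.app X)
  torsion : ∀ X : A, T (t.obj X)
  free_quotient : ∀ X : A, F (cokernel (ι.app X))
  hom_zero : ∀ (X Y : A) (f : X ⟶ Y), T X → F Y → f = 0

/-- A torsion pair is hereditary if the torsion class is closed under subobjects. -/
def TorsionPairData.Hereditary {A : Type u} [Category.{v} A] [Abelian A]
    (D : TorsionPairData A) : Prop :=
  ∀ (X Y : A) (f : X ⟶ Y), Mono f → D.T Y → D.T X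

variable {A : Type u} [Category.{v} A] [Abelian A]

/-- The class `S_t`: short exact sequences `0 → X → Y → Z → 0` such that
`0 → t(X) → t(Y) → t(Z) → 0` is also short exact. -/
def TorsionPairData.St (D : TorsionPairData A) : Set (ShortComplex A) :=
  {S | S.ShortExact ∧ ∃ w : D.t.map S.f ≫ D.t.map S.g = 0,
    (ShortComplex.mk (D.t.map S.f) (D.t.map S.g) w).ShortExact}

/-- Closure of a class of short exact sequences under pullback along arbitrary morphisms
into the third term: any short exact sequence mapping to a member by a morphism which is an
isomorphism on first terms (i.e. a pullback of it) is again a member. -/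
def ClosedUnderPullback (E : Set (ShortComplex A)) : Prop :=
  ∀ S ∈ E, ∀ S' : ShortComplex A, S'.ShortExact →
    ∀ φ : S' ⟶ S, IsIso φ.τ₁ → S' ∈ E

/-- Closure under pushout along arbitrary morphisms out of the first term. -/
def ClosedUnderPushout (E : Set (ShortComplex A)) : Prop :=
  ∀ S ∈ E, ∀ S' : ShortComplex A, S'.ShortExact →
    ∀ φ : S ⟶ S', IsIso φ.τ₃ → S' ∈ E

/-- An exact (sub)structure on the abelian category `A` in the sense of
Dräxler–Reiten–Smalø–Solberg: a class of short exact sequences containing all split ones,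
closed under isomorphism, pullback and pushout. -/
structure IsExactSubstructure (E : Set (ShortComplex A)) : Prop where
  shortExact : ∀ S ∈ E, S.ShortExact
  iso_closed : ∀ S ∈ E, ∀ S' : ShortComplex A, (S ≅ S') → S' ∈ E
  split_mem : ∀ S : ShortComplex A, S.ShortExact → Nonempty S.Splitting → S ∈ E
  pullback_closed : ClosedUnderPullback E
  pushout_closed : ClosedUnderPushout E

namespace TorsionPairData

variable (D : TorsionPairData A)

lemma factor_of_torsion {W X : A} (hW : D.T W) (f : W ⟶ X) :
    ∃ u : W ⟶ D.t.obj X, u ≫ D.ι.app X = f := by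
  haveI := D.mono X
  have h0 : f ≫ cokernel.π (D.ι.app X) = 0 := D.hom_zero _ _ _ hW (D.free_quotient X)
  exact ⟨Abelian.monoLift _ f h0, Abelian.monoLift_comp _ f h0⟩

lemma mono_t_map {X Y : A} (f : X ⟶ Y) [Mono f] : Mono (D.t.map f) := by
  haveI := D.mono Y
  haveI := D.mono X
  haveI : Mono (D.t.map f ≫ D.ι.app Y) := by
    rw [D.ι.naturality f, Functor.id_map]
    exact mono_comp _ _
  exact mono_of_mono (D.t.map f) (D.ι.app Y)

lemma mem_St_iff (hD : D.Hereditary) (S : ShortComplex A) :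
    S ∈ D.St ↔ S.ShortExact ∧ Epi (D.t.map S.g) := by
  haveI := D.additive
  constructor
  · rintro ⟨hS, w, hT⟩
    exact ⟨hS, hT.epi_g⟩
  · rintro ⟨hS, hepi⟩
    haveI := hS.mono_f
    haveI := hS.epi_g
    haveI := D.mono S.X₂
    haveI := D.mono S.X₃
    have w : D.t.map S.f ≫ D.t.map S.g = 0 := by
      rw [← Functor.map_comp, S.zero, Functor.map_zero]
    refine ⟨hS, w, ?_⟩
    have hmono := D.mono_t_map S.f
    have hj : (kernel.ι (D.t.map S.g) ≫ D.ι.app S.X₂) ≫ S.g = 0 := by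
      have hn := D.ι.naturality S.g
      rw [Functor.id_map] at hn
      rw [Category.assoc, ← hn, ← Category.assoc, kernel.condition, zero_comp]
    obtain ⟨l, hl⟩ := hS.exact.lift' _ hj
    have hT : D.T (kernel (D.t.map S.g)) :=
      hD _ _ (kernel.ι (D.t.map S.g)) inferInstance (D.torsion S.X₂)
    obtain ⟨u, hu⟩ := D.factor_of_torsion hT l
    have hu' : u ≫ D.t.map S.f = kernel.ι (D.t.map S.g) := by
      rw [← cancel_mono (D.ι.app S.X₂)]
      have hn := D.ι.naturality S.f
      rw [Functor.id_map] at hn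
      rw [Category.assoc, hn, ← Category.assoc, hu, hl]
    exact { exact := ShortComplex.exact_of_f_is_kernel _
              (KernelFork.IsLimit.ofι' _ _ (fun {W'} k hk =>
                ⟨kernel.lift (D.t.map S.g) k hk ≫ u, by
                  rw [Category.assoc, hu', kernel.lift_ι]⟩)),
            mono_f := hmono, epi_g := hepi }

lemma torsion_biprod (hD : D.Hereditary) (X Y : A) : D.T (D.t.obj X ⊞ D.t.obj Y) := by
  haveI := D.additive
  have hcomp : biprod.desc (D.t.map (biprod.inl : X ⟶ X ⊞ Y)) (D.t.map (biprod.inr : Y ⟶ X ⊞ Y)) ≫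
      biprod.lift (D.t.map (biprod.fst : X ⊞ Y ⟶ X)) (D.t.map (biprod.snd : X ⊞ Y ⟶ Y)) = 𝟙 _ := by
    apply biprod.hom_ext' <;> apply biprod.hom_ext <;>
      simp [← Functor.map_comp]
  haveI : Mono (biprod.desc (D.t.map (biprod.inl : X ⟶ X ⊞ Y))
      (D.t.map (biprod.inr : Y ⟶ X ⊞ Y)) ≫
      biprod.lift (D.t.map (biprod.fst : X ⊞ Y ⟶ X)) (D.t.map (biprod.snd : X ⊞ Y ⟶ Y))) := by
    rw [hcomp]; infer_instance
  exact hD _ _ _ (mono_of_mono (biprod.desc (D.t.map (biprod.inl : X ⟶ X ⊞ Y))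
    (D.t.map (biprod.inr : Y ⟶ X ⊞ Y))) (biprod.lift (D.t.map (biprod.fst : X ⊞ Y ⟶ X))
    (D.t.map (biprod.snd : X ⊞ Y ⟶ Y)))) (D.torsion (X ⊞ Y))

lemma pullback_closed (hD : D.Hereditary) : ClosedUnderPullback D.St := by
  intro S hS S' hS' φ hφ
  rw [D.mem_St_iff hD] at hS ⊢
  obtain ⟨hSe, hepi⟩ := hS
  refine ⟨hS', ?_⟩
  haveI := D.additive
  haveI := hSe.epi_g
  haveI := hSe.mono_f
  haveI := hS'.epi_g
  haveI := hS'.mono_f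
  haveI := D.mono S.X₂
  haveI := D.mono S'.X₂
  haveI := D.mono S.X₃
  haveI := D.mono S'.X₃
  haveI := hφ
  haveI := hepi
  -- naturality facts
  have hnS : D.t.map S.g ≫ D.ι.app S.X₃ = D.ι.app S.X₂ ≫ S.g := by
    have := D.ι.naturality S.g; rwa [Functor.id_map] at this
  have hnS' : D.t.map S'.g ≫ D.ι.app S'.X₃ = D.ι.app S'.X₂ ≫ S'.g := by
    have := D.ι.naturality S'.g; rwa [Functor.id_map] at this
  have hnτ : D.t.map φ.τ₃ ≫ D.ι.app S.X₃ = D.ι.app S'.X₃ ≫ φ.τ₃ := by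
    have := D.ι.naturality φ.τ₃; rwa [Functor.id_map] at this
  -- the pullback Q of S.g along φ.τ₃, as a short exact complex
  let k : S.X₁ ⟶ pullback S.g φ.τ₃ :=
    pullback.lift S.f 0 (by rw [S.zero, zero_comp])
  have hkf : k ≫ pullback.fst S.g φ.τ₃ = S.f := pullback.lift_fst _ _ _
  have hk : k ≫ pullback.snd S.g φ.τ₃ = 0 := pullback.lift_snd _ _ _
  haveI : Mono k := by
    haveI : Mono (k ≫ pullback.fst S.g φ.τ₃) := by rw [hkf]; infer_instance
    exact mono_of_mono k (pullback.fst S.g φ.τ₃)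
  let SQ : ShortComplex A := ShortComplex.mk k (pullback.snd S.g φ.τ₃) hk
  have hSQ : SQ.ShortExact :=
    { exact := ShortComplex.exact_of_f_is_kernel _
        (KernelFork.IsLimit.ofι' _ _ (fun {W} w hw => by
          have h1 : (w ≫ pullback.fst S.g φ.τ₃) ≫ S.g = 0 := by
            rw [Category.assoc, pullback.condition, ← Category.assoc, hw, zero_comp]
          refine ⟨hSe.exact.lift _ h1, pullback.hom_ext ?_ ?_⟩
          · rw [Category.assoc]
            show hSe.exact.lift _ h1 ≫ k ≫ pullback.fst S.g φ.τ₃ = _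
            rw [hkf, hSe.exact.lift_f]
          · rw [Category.assoc]
            show hSe.exact.lift _ h1 ≫ k ≫ pullback.snd S.g φ.τ₃ = _
            rw [hk, comp_zero, hw]))
      mono_f := ‹_›
      epi_g := inferInstance }
  -- the comparison map q : S'.X₂ ⟶ Q is an isomorphism
  let q : S'.X₂ ⟶ pullback S.g φ.τ₃ := pullback.lift φ.τ₂ S'.g φ.comm₂₃
  let ψ : S' ⟶ SQ :=
    { τ₁ := φ.τ₁
      τ₂ := q
      τ₃ := 𝟙 S'.X₃
      comm₁₂ := by
        refine pullback.hom_ext ?_ ?_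
        · rw [Category.assoc, Category.assoc]
          show φ.τ₁ ≫ k ≫ pullback.fst S.g φ.τ₃ = S'.f ≫ q ≫ pullback.fst S.g φ.τ₃
          rw [hkf, pullback.lift_fst, φ.comm₁₂]
        · rw [Category.assoc, Category.assoc]
          show φ.τ₁ ≫ k ≫ pullback.snd S.g φ.τ₃ = S'.f ≫ q ≫ pullback.snd S.g φ.τ₃
          rw [hk, comp_zero, pullback.lift_snd, S'.zero]
      comm₂₃ := by
        rw [Category.comp_id]
        exact pullback.lift_snd _ _ _ }
  haveI : IsIso ψ.τ₁ := hφ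
  haveI : IsIso ψ.τ₃ := by dsimp [ψ]; infer_instance
  haveI hq : IsIso q := ShortComplex.isIso₂_of_shortExact_of_isIso₁₃ ψ hS' hSQ
  -- the pullback P of t(S.g) along t(φ.τ₃)
  set tp1 := pullback.fst (D.t.map S.g) (D.t.map φ.τ₃) with htp1
  set tp2 := pullback.snd (D.t.map S.g) (D.t.map φ.τ₃) with htp2
  haveI : Epi tp2 := by rw [htp2]; infer_instance
  have hmP : Mono (biprod.lift tp1 tp2) := by
    constructor
    intro W a b h
    refine pullback.hom_ext ?_ ?_
    · have := h =≫ biprod.fst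
      simpa using this
    · have := h =≫ biprod.snd
      simpa using this
  have hTP : D.T (pullback (D.t.map S.g) (D.t.map φ.τ₃)) :=
    hD _ _ (biprod.lift tp1 tp2) hmP (D.torsion_biprod hD S.X₂ S'.X₃)
  -- the map P ⟶ Q ⟶ S'.X₂
  have wcond : (tp1 ≫ D.ι.app S.X₂) ≫ S.g = (tp2 ≫ D.ι.app S'.X₃) ≫ φ.τ₃ := by
    rw [Category.assoc, ← hnS, ← Category.assoc, pullback.condition,
      Category.assoc, Category.assoc, hnτ]
  let m : pullback (D.t.map S.g) (D.t.map φ.τ₃) ⟶ pullback S.g φ.τ₃ :=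
    pullback.lift (tp1 ≫ D.ι.app S.X₂) (tp2 ≫ D.ι.app S'.X₃) wcond
  let h : pullback (D.t.map S.g) (D.t.map φ.τ₃) ⟶ S'.X₂ := m ≫ inv q
  have hinv : inv q ≫ S'.g = pullback.snd S.g φ.τ₃ := by
    rw [IsIso.inv_comp_eq]
    exact (pullback.lift_snd _ _ _).symm
  have hhg : h ≫ S'.g = tp2 ≫ D.ι.app S'.X₃ := by
    rw [Category.assoc, hinv]
    exact pullback.lift_snd _ _ _
  obtain ⟨u, hu⟩ := D.factor_of_torsion hTP h
  have hfac : u ≫ D.t.map S'.g = tp2 := by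
    rw [← cancel_mono (D.ι.app S'.X₃), Category.assoc, hnS', ← Category.assoc, hu, hhg]
  exact epi_of_epi_fac hfac

lemma pushout_closed (hD : D.Hereditary) : ClosedUnderPushout D.St := by
  intro S hS S' hS' φ hφ
  rw [D.mem_St_iff hD] at hS ⊢
  obtain ⟨hSe, hepi⟩ := hS
  refine ⟨hS', ?_⟩
  haveI := D.additive
  haveI := hφ
  haveI := hepi
  have hc : D.t.map φ.τ₂ ≫ D.t.map S'.g = D.t.map S.g ≫ D.t.map φ.τ₃ := by
    rw [← Functor.map_comp, ← Functor.map_comp, φ.comm₂₃]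
  haveI : Epi (D.t.map S.g ≫ D.t.map φ.τ₃) := epi_comp _ _
  rw [← hc] at this
  exact epi_of_epi (D.t.map φ.τ₂) _

end TorsionPairData

/-- For a hereditary torsion pair, the class `S_t` is closed under pullbacks and pushouts
and hence forms an exact structure on `A`. -/

theorem St_isExactSubstructure (D : TorsionPairData A) (hD : D.Hereditary) :
    ClosedUnderPullback D.St ∧ ClosedUnderPushout D.St ∧ IsExactSubstructure D.St := by
  have hpull := D.pullback_closed hD
  have hpush := D.pushout_closed hD
  refine ⟨hpull, hpush, ?_, ?_, ?_, hpull, hpush⟩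
  · exact fun S hS => hS.1
  · intro S hS S' e
    haveI : IsIso e.inv.τ₁ := by
      refine ⟨e.hom.τ₁, ?_, ?_⟩
      · rw [← ShortComplex.comp_τ₁, e.inv_hom_id, ShortComplex.id_τ₁]
      · rw [← ShortComplex.comp_τ₁, e.hom_inv_id, ShortComplex.id_τ₁]
    exact hpull S hS S' (ShortComplex.shortExact_of_iso e hS.1) e.inv inferInstance
  · rintro S hSe ⟨s⟩
    rw [D.mem_St_iff hD]
    refine ⟨hSe, ?_⟩
    haveI := D.additive
    haveI : Epi (D.t.map s.s ≫ D.t.map S.g) := by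
      rw [← Functor.map_comp, s.s_g, CategoryTheory.Functor.map_id]
      infer_instance
    exact epi_of_epi (D.t.map s.s) _
end

section
/- Let A and B be exact categories with B weakly idempotent complete, and let f : A → B be a left exact functor (i.e., f sends every admissible short exact sequence X ↣ Y ↠ Z to a sequence where f(X) → f(Y) is an admissible monic with cokernel mapping admissibly onto an image of f(Y) → f(Z), in the dual sense of right exactness). Then the class S_f of admissible short exact sequences η of A such that f(η) is admissible exact in B is an exact structure on A. -/
open CategoryTheory CategoryTheory.Limits

universe v u v' u'

/-- A Quillen exact structure on an additive category `C`: a class of kernel–cokernel pairs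
(encoded as short complexes) containing the split ones, closed under isomorphism, with
inflations and deflations closed under composition, and admitting pushouts along arbitrary
morphisms out of the first term and pullbacks along arbitrary morphisms into the third
term, which again belong to the class. -/
structure ExactStructure (C : Type u) [Category.{v} C] [Preadditive C]
    [HasBinaryBiproducts C] where
  sequences : Set (ShortComplex C)
  isKernel : ∀ S ∈ sequences, Nonempty (IsLimit (KernelFork.ofι S.f S.zero))
  isCokernel : ∀ S ∈ sequences, Nonempty (IsColimit (CokernelCofork.ofπ S.g S.zero))
  iso_closed : ∀ S ∈ sequences, ∀ S' : ShortComplex C, (S ≅ S') → S' ∈ sequences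
  split_mem : ∀ X Y : C,
    ShortComplex.mk (biprod.inl : X ⟶ X ⊞ Y) (biprod.snd : X ⊞ Y ⟶ Y) (by simp) ∈ sequences
  infl_comp : ∀ {X Y Z : C} (f : X ⟶ Y) (g : Y ⟶ Z),
    (∃ (W : C) (q : Y ⟶ W) (w : f ≫ q = 0), ShortComplex.mk f q w ∈ sequences) →
    (∃ (W : C) (q : Z ⟶ W) (w : g ≫ q = 0), ShortComplex.mk g q w ∈ sequences) →
    (∃ (W : C) (q : Z ⟶ W) (w : (f ≫ g) ≫ q = 0), ShortComplex.mk (f ≫ g) q w ∈ sequences)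
  defl_comp : ∀ {X Y Z : C} (f : X ⟶ Y) (g : Y ⟶ Z),
    (∃ (W : C) (i : W ⟶ X) (w : i ≫ f = 0), ShortComplex.mk i f w ∈ sequences) →
    (∃ (W : C) (i : W ⟶ Y) (w : i ≫ g = 0), ShortComplex.mk i g w ∈ sequences) →
    (∃ (W : C) (i : W ⟶ X) (w : i ≫ (f ≫ g) = 0), ShortComplex.mk i (f ≫ g) w ∈ sequences)
  pushout_ex : ∀ S ∈ sequences, ∀ (A : C) (a : S.X₁ ⟶ A),
    ∃ S' ∈ sequences, ∃ (φ : S ⟶ S') (e : A ≅ S'.X₁),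
      φ.τ₁ = a ≫ e.hom ∧ IsIso φ.τ₃ ∧ IsPushout S.f φ.τ₁ φ.τ₂ S'.f
  pullback_ex : ∀ S ∈ sequences, ∀ (A : C) (c : A ⟶ S.X₃),
    ∃ S' ∈ sequences, ∃ (φ : S' ⟶ S) (e : S'.X₃ ≅ A),
      φ.τ₃ = e.hom ≫ c ∧ IsIso φ.τ₁ ∧ IsPullback S'.g φ.τ₂ φ.τ₃ S.g

variable {A : Type u} [Category.{v} A] [Preadditive A] [HasBinaryBiproducts A]
variable {B : Type u'} [Category.{v'} B] [Preadditive B] [HasBinaryBiproducts B]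

/-- `B` is weakly idempotent complete if every retraction has a kernel. -/
def WeaklyIdemComplete (B : Type u') [Category.{v'} B] [Preadditive B] : Prop :=
  ∀ ⦃X Y : B⦄ (r : X ⟶ Y) (s : Y ⟶ X), s ≫ r = 𝟙 Y → HasKernel r

/-- A functor `f : A → B` between exact categories is left exact if for every admissible
short exact sequence `X ↣ Y ↠ Z` of `A`, the morphism `f Y ⟶ f Z` factors as
`f Y ↠ I ↣ f Z` with `I ↣ f Z` monic and `f X ↣ f Y ↠ I` admissible exact in `B`
(the notion dual to right exactness). -/
def LeftExactOn (EA : ExactStructure A) (EB : ExactStructure B) (f : A ⥤ B) : Prop :=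
  ∀ S ∈ EA.sequences,
    ∃ (I : B) (e : f.obj S.X₂ ⟶ I) (m : I ⟶ f.obj S.X₃) (w : f.map S.f ≫ e = 0),
      f.map S.g = e ≫ m ∧ Mono m ∧ ShortComplex.mk (f.map S.f) e w ∈ EB.sequences

/-- The class `S_f` of admissible short exact sequences `η` of `A` with `f(η)` admissible
exact in `B`. -/
def Sf (EA : ExactStructure A) (EB : ExactStructure B) (f : A ⥤ B) : Set (ShortComplex A) :=
  {S | S ∈ EA.sequences ∧
    ∃ w : f.map S.f ≫ f.map S.g = 0,
      ShortComplex.mk (f.map S.f) (f.map S.g) w ∈ EB.sequences}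

/-! If `f` is left exact, `f` of an admissible deflation `g` factors as `e ≫ m` with `e` a
deflation and `m` monic. In a weakly idempotent complete category `m` is a deflation as soon as
some `x ≫ m` is (Bühler, Prop. 7.6), and a monic deflation is an isomorphism; so an admissible
sequence lies in `S_f` as soon as `f` maps its deflation to a deflation. Most axioms follow at
once. For composites of inflations `i₁ ≫ i₂` one uses the Noether sequence `W₁ ↣ W ↠ W₂` of the
cokernels, which lies in `S_f`, to show that the pullback of `f(q₂)` along `f(W ↠ W₂)` factors
through `m`. For pullbacks, the pulled-back middle object is the kernel of the deflation
`S.X₂ ⊞ A₀ ⟶ S.X₃`; this kernel sequence lies in `S_f`, so `f` preserves the pullback square,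
and pullbacks of deflations are deflations. -/

section Preadditive

variable {C : Type u} [Category.{v} C] [Preadditive C]

lemma isPushout_of_isColimit_cokernelCofork {X Y Z W₁ W : C} {i₁ : X ⟶ Y} {i₂ : Y ⟶ Z}
    {q₁ : Y ⟶ W₁} [Epi q₁] (w₁ : i₁ ≫ q₁ = 0) {q : Z ⟶ W} {w : (i₁ ≫ i₂) ≫ q = 0}
    (hq : IsColimit (CokernelCofork.ofπ q w)) {κ : W₁ ⟶ W} (hκ : q₁ ≫ κ = i₂ ≫ q) :
    IsPushout i₂ q₁ q κ := by
  refine ⟨⟨hκ.symm⟩, ⟨PushoutCocone.IsColimit.mk _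
    (fun t => Cofork.IsColimit.desc hq t.inl (by simp [t.condition, reassoc_of% w₁]))
    (fun t => Cofork.IsColimit.π_desc' hq _ _) (fun t => ?_)
    (fun t m h₁ _ => Cofork.IsColimit.hom_ext hq ?_)⟩⟩
  · rw [← cancel_epi q₁, reassoc_of% hκ]
    exact (i₂ ≫= Cofork.IsColimit.π_desc' hq _ _).trans t.condition
  · exact h₁.trans (Cofork.IsColimit.π_desc' hq _ _).symm

lemma isPushout_biprod_snd_of_isLimit {X Y Z K N : C} [HasBinaryBiproduct X Y] {g : Y ⟶ Z}
    {k : K ⟶ X ⊞ Y} {wk : k ≫ biprod.snd ≫ g = 0} (hk : IsLimit (KernelFork.ofι k wk)) {ν : N ⟶ Y}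
    {wν : ν ≫ g = 0} (hν : IsLimit (KernelFork.ofι ν wν)) {a : K ⟶ N}
    (ha : a ≫ ν = k ≫ biprod.snd) : IsPushout k a biprod.snd ν := by
  have : Mono ν := mono_of_isLimit_fork hν
  obtain ⟨s, hs : s ≫ k = _⟩ := KernelFork.IsLimit.lift' hk (biprod.inl : X ⟶ X ⊞ Y) (by simp)
  obtain ⟨r, hr : r ≫ k = _⟩ := KernelFork.IsLimit.lift' hk (ν ≫ biprod.inr) (by simp [wν])
  have hsa : s ≫ a = 0 := by
    rw [← cancel_mono ν, Category.assoc, ha, reassoc_of% hs]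
    simp
  have hra : r ≫ a = 𝟙 N := by
    rw [← cancel_mono ν, Category.assoc, ha, reassoc_of% hr]
    simp
  refine ⟨⟨ha.symm⟩, ⟨PushoutCocone.IsColimit.mk _ (fun t => biprod.inr ≫ t.inl) ?_ ?_ ?_⟩⟩
  · intro t
    have hinl : (biprod.inl : X ⟶ X ⊞ Y) ≫ t.inl = 0 := by
      rw [← hs, Category.assoc, t.condition, reassoc_of% hsa, zero_comp]
    ext <;> simp [hinl]
  · intro t
    rw [← reassoc_of% hr, t.condition, reassoc_of% hra]
  · intro t m h₁ _
    rw [← h₁]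
    simp

end Preadditive

namespace ExactStructure

variable {C : Type u} [Category.{v} C] [Preadditive C] [HasBinaryBiproducts C]
  (E : ExactStructure C)

def IsDeflation {X Y : C} (g : X ⟶ Y) : Prop :=
  ∃ (K : C) (i : K ⟶ X) (w : i ≫ g = 0), ShortComplex.mk i g w ∈ E.sequences

variable {E}

lemma epi_g {S : ShortComplex C} (hS : S ∈ E.sequences) : Epi S.g :=
  epi_of_isColimit_cofork (E.isCokernel S hS).some

lemma isDeflation_g {S : ShortComplex C} (hS : S ∈ E.sequences) : E.IsDeflation S.g :=
  ⟨S.X₁, S.f, S.zero, hS⟩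

lemma IsDeflation.comp {X Y Z : C} {g : X ⟶ Y} {h : Y ⟶ Z} (hg : E.IsDeflation g)
    (hh : E.IsDeflation h) : E.IsDeflation (g ≫ h) :=
  E.defl_comp g h hg hh

lemma IsDeflation.comp_isIso {X Y Z : C} {g : X ⟶ Y} (hg : E.IsDeflation g) (e : Y ⟶ Z)
    [IsIso e] : E.IsDeflation (g ≫ e) := by
  obtain ⟨K, i, w, hK⟩ := hg
  refine ⟨K, i, by rw [reassoc_of% w, zero_comp], E.iso_closed _ hK _ ?_⟩
  exact ShortComplex.isoMk (Iso.refl _) (Iso.refl _) (asIso e) (by simp) (by simp)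

lemma IsDeflation.isIso_comp {W X Y : C} {g : X ⟶ Y} (hg : E.IsDeflation g) (e : W ⟶ X)
    [IsIso e] : E.IsDeflation (e ≫ g) := by
  obtain ⟨K, i, w, hK⟩ := hg
  refine ⟨K, i ≫ inv e, by simp [w], E.iso_closed _ hK _ ?_⟩
  exact ShortComplex.isoMk (Iso.refl _) (asIso e).symm (Iso.refl _) (by simp) (by simp)

lemma isIso_of_mono_of_isDeflation {X Y : C} {g : X ⟶ Y} [Mono g] (hg : E.IsDeflation g) :
    IsIso g := by
  obtain ⟨K, i, w, hK⟩ := hg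
  exact CokernelCofork.IsColimit.isIso_π _ (E.isCokernel _ hK).some
    (by rw [← cancel_mono g, w, zero_comp])

lemma mem_of_isLimit_kernelFork {K X Y : C} {i : K ⟶ X} {g : X ⟶ Y} {w : i ≫ g = 0}
    (hg : E.IsDeflation g) (hi : IsLimit (KernelFork.ofι i w)) :
    ShortComplex.mk i g w ∈ E.sequences := by
  obtain ⟨K', i', w', hK'⟩ := hg
  have hi' := (E.isKernel _ hK').some
  refine E.iso_closed _ hK' _ (ShortComplex.isoMk (IsLimit.conePointUniqueUpToIso hi' hi)
    (Iso.refl _) (Iso.refl _) ?_ (by simp))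
  simpa using IsLimit.conePointUniqueUpToIso_hom_comp hi' hi WalkingParallelPair.zero

lemma isDeflation_biprod_fst (X Y : C) : E.IsDeflation (biprod.fst : X ⊞ Y ⟶ X) := by
  have h := (isDeflation_g (E.split_mem Y X)).isIso_comp (biprod.braiding X Y).hom
  simpa using h

lemma IsDeflation.exists_isPullback {Y Z : C} {g : Y ⟶ Z} (hg : E.IsDeflation g) {W : C}
    (c : W ⟶ Z) : ∃ (P : C) (t : P ⟶ W) (s : P ⟶ Y), E.IsDeflation t ∧ IsPullback t s c g := by
  obtain ⟨K, i, w, hK⟩ := hg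
  obtain ⟨S', hS', φ, e, hτ₃, -, hpb⟩ := E.pullback_ex _ hK W c
  refine ⟨S'.X₂, S'.g ≫ e.hom, φ.τ₂, (isDeflation_g hS').comp_isIso _, ?_⟩
  exact hpb.of_iso (Iso.refl _) e (Iso.refl _) (Iso.refl _) (by simp) (by simp)
    (by simp [hτ₃]) (by simp)

lemma IsDeflation.of_isPullback {P W Y Z : C} {t : P ⟶ W} {s : P ⟶ Y} {c : W ⟶ Z}
    {g : Y ⟶ Z} (hg : E.IsDeflation g) (h : IsPullback t s c g) : E.IsDeflation t := by
  obtain ⟨P', t', s', ht', h'⟩ := hg.exists_isPullback c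
  rw [← h.isoIsPullback_hom_fst _ _ h']
  exact ht'.isIso_comp _

lemma IsDeflation.biprod_map_id {X Y : C} {h : X ⟶ Y} (hh : E.IsDeflation h) (Z : C) :
    E.IsDeflation (biprod.map h (𝟙 Z)) := by
  refine hh.of_isPullback (s := biprod.fst) (c := biprod.fst) ⟨⟨by simp⟩, ⟨?_⟩⟩
  refine PullbackCone.IsLimit.mk _ (fun s => biprod.lift s.snd (s.fst ≫ biprod.snd))
    (fun s => ?_) (fun s => by simp) (fun s m h₁ h₂ => ?_)
  · ext
    · simpa using s.condition.symm
    · simp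
  · ext
    · simpa using h₂
    · simpa using h₁ =≫ biprod.snd

lemma IsDeflation.biprod_desc {X Y Z : C} {h : X ⟶ Y} (hh : E.IsDeflation h) (x : Z ⟶ Y) :
    E.IsDeflation (biprod.desc h x) := by
  have : biprod.desc h x = biprod.map h (𝟙 Z) ≫ (Biprod.unipotentLower x).hom ≫ biprod.fst := by
    ext <;> simp [Biprod.ofComponents]
  rw [this]
  exact (hh.biprod_map_id Z).comp ((isDeflation_biprod_fst Y Z).isIso_comp _)

lemma IsDeflation.biprod_snd_comp {X Y Z : C} {u : X ⟶ Y} {g : Y ⟶ Z}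
    (h : E.IsDeflation (u ≫ g)) : E.IsDeflation (biprod.snd ≫ g : X ⊞ Y ⟶ Z) := by
  have : (biprod.snd ≫ g : X ⊞ Y ⟶ Z) =
      (Biprod.unipotentUpper (-u)).hom ≫ biprod.desc (u ≫ g) g := by
    ext <;> simp [Biprod.ofComponents]
  rw [this]
  exact (h.biprod_desc g).isIso_comp _

lemma mem_of_isPushout {S : ShortComplex C} (hS : S ∈ E.sequences) {A Y : C}
    {a : S.X₁ ⟶ A} {b : S.X₂ ⟶ Y} {i : A ⟶ Y} {p : Y ⟶ S.X₃} (h : IsPushout S.f a b i)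
    (hp : b ≫ p = S.g) (hi : i ≫ p = 0) : ShortComplex.mk i p hi ∈ E.sequences := by
  obtain ⟨S', hS', φ, e, hτ₁, hτ₃, h'⟩ := E.pushout_ex S hS A a
  have h'' : IsPushout S.f a φ.τ₂ (e.hom ≫ S'.f) :=
    h'.of_iso (Iso.refl _) (Iso.refl _) e.symm (Iso.refl _) (by simp) (by simp [hτ₁])
      (by simp) (by simp)
  refine E.iso_closed _ hS' _ (ShortComplex.isoMk e.symm (h''.isoIsPushout _ _ h)
    (asIso φ.τ₃).symm ?_ ?_)
  · have := e.inv ≫= h''.inr_isoIsPushout_hom _ _ h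
    simp only [Category.assoc, Iso.inv_hom_id_assoc] at this
    exact this.symm
  · refine h''.hom_ext ?_ ?_
    · simp [reassoc_of% (h''.inl_isoIsPushout_hom _ _ h), hp, φ.comm₂₃_assoc]
    · simp [hi]

/-- The dual of Bühler's "obscure axiom" (*Exact categories*, Prop. 2.16). -/
lemma mem_of_isDeflation_comp {X Y Z N : C} {u : X ⟶ Y} {g : Y ⟶ Z} {ν : N ⟶ Y}
    {w : ν ≫ g = 0} (hν : IsLimit (KernelFork.ofι ν w)) (h : E.IsDeflation (u ≫ g)) :
    ShortComplex.mk ν g w ∈ E.sequences := by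
  obtain ⟨K, k, wk, hK⟩ := h.biprod_snd_comp
  obtain ⟨a, ha⟩ := KernelFork.IsLimit.lift' hν (k ≫ biprod.snd) (by simpa using wk)
  exact mem_of_isPushout hK (isPushout_biprod_snd_of_isLimit (E.isKernel _ hK).some hν ha)
    rfl w

lemma hasKernel_of_isDeflation_comp (hC : WeaklyIdemComplete C) {X Y Z : C} {u : X ⟶ Y}
    {g : Y ⟶ Z} (h : E.IsDeflation (u ≫ g)) : HasKernel g := by
  obtain ⟨K, k, wk, hK⟩ := h.biprod_snd_comp
  have hk := (E.isKernel _ hK).some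
  have : Mono k := mono_of_isLimit_fork hk
  obtain ⟨s, hs : s ≫ k = _⟩ := KernelFork.IsLimit.lift' hk (biprod.inl : X ⟶ X ⊞ Y) (by simp)
  -- the retraction `k ≫ biprod.fst` has a kernel; composed with `k ≫ biprod.snd` it is a
  -- kernel of `g`
  have := hC (k ≫ biprod.fst) s (by simp [reassoc_of% hs])
  have hν : Mono (kernel.ι (k ≫ biprod.fst) ≫ k ≫ biprod.snd) := by
    refine (Preadditive.mono_iff_cancel_zero _).2 fun T a ha => ?_
    have : a ≫ kernel.ι (k ≫ biprod.fst) ≫ k = 0 := by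
      ext
      · simp
      · simp [ha]
    exact zero_of_comp_mono _ (zero_of_comp_mono k (by simpa using this))
  refine ⟨⟨⟨_, KernelFork.IsLimit.ofι' (kernel.ι (k ≫ biprod.fst) ≫ k ≫ biprod.snd)
    (by simp [wk]) fun {T} t ht => ?_⟩⟩⟩
  obtain ⟨t', ht' : t' ≫ k = t ≫ biprod.inr⟩ :=
    KernelFork.IsLimit.lift' hk (t ≫ biprod.inr) (by simpa using ht)
  exact ⟨kernel.lift _ t' (by simp [reassoc_of% ht']), by simp [reassoc_of% ht']⟩

/-- Bühler, *Exact categories*, Prop. 7.6. -/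
lemma isDeflation_of_isDeflation_comp (hC : WeaklyIdemComplete C) {X Y Z : C} (u : X ⟶ Y)
    {g : Y ⟶ Z} (h : E.IsDeflation (u ≫ g)) : E.IsDeflation g := by
  have := hasKernel_of_isDeflation_comp hC h
  exact ⟨_, kernel.ι g, kernel.condition g, mem_of_isDeflation_comp (kernelIsKernel g) h⟩

/-- Bühler, *Exact categories*, Lemma 3.5 (Noether isomorphism). -/
lemma mem_noether {X Y Z W₁ W₂ W : C} {i₁ : X ⟶ Y} {i₂ : Y ⟶ Z} {q₁ : Y ⟶ W₁}
    {q₂ : Z ⟶ W₂} {q : Z ⟶ W} {w₁ : i₁ ≫ q₁ = 0} {w₂ : i₂ ≫ q₂ = 0} {w : (i₁ ≫ i₂) ≫ q = 0}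
    (h₁ : ShortComplex.mk i₁ q₁ w₁ ∈ E.sequences) (h₂ : ShortComplex.mk i₂ q₂ w₂ ∈ E.sequences)
    (h : ShortComplex.mk (i₁ ≫ i₂) q w ∈ E.sequences) {κ : W₁ ⟶ W} {π : W ⟶ W₂}
    (hκ : q₁ ≫ κ = i₂ ≫ q) (hπ : q ≫ π = q₂) (wκπ : κ ≫ π = 0) :
    ShortComplex.mk κ π wκπ ∈ E.sequences :=
  have := epi_g h₁
  mem_of_isPushout h₂ (isPushout_of_isColimit_cokernelCofork w₁ (E.isCokernel _ h).some hκ)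
    hπ wκπ

/-- The pullback of the deflation `p ≫ π` along `π` is a deflation factoring through `m`. -/
lemma isDeflation_of_kernel_and_map_factor (hC : WeaklyIdemComplete C) {W₁ W W₂ Z I : C}
    {κ : W₁ ⟶ W} {π : W ⟶ W₂} {wκ : κ ≫ π = 0} (hκ : IsLimit (KernelFork.ofι κ wκ)) {p : Z ⟶ W}
    (hp : E.IsDeflation (p ≫ π)) {m : I ⟶ W} {j : W₁ ⟶ I} {e : Z ⟶ I} (hj : j ≫ m = κ)
    (he : e ≫ m = p) : E.IsDeflation m := by
  obtain ⟨P, t, s, ht, hpb⟩ := hp.exists_isPullback π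
  obtain ⟨y, hy : y ≫ κ = t - s ≫ p⟩ :=
    KernelFork.IsLimit.lift' hκ (t - s ≫ p) (by simp [hpb.w])
  refine isDeflation_of_isDeflation_comp hC (y ≫ j + s ≫ e) ?_
  convert ht using 1
  simp [hj, he, hy]

end ExactStructure

section LeftExact

open ExactStructure

variable {EA : ExactStructure A} {EB : ExactStructure B} {f : A ⥤ B}

lemma mem_Sf_iff [f.PreservesZeroMorphisms] {S : ShortComplex A} :
    S ∈ Sf EA EB f ↔ S ∈ EA.sequences ∧ S.map f ∈ EB.sequences :=
  ⟨fun ⟨hS, _, h⟩ => ⟨hS, h⟩, fun ⟨hS, h⟩ => ⟨hS, _, h⟩⟩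

lemma isDeflation_map_g_of_mem_Sf {S : ShortComplex A} (hS : S ∈ Sf EA EB f) :
    EB.IsDeflation (f.map S.g) :=
  let ⟨_, w, h⟩ := hS
  ⟨_, _, w, h⟩

namespace LeftExactOn

lemma map_zero (hf : LeftExactOn EA EB f) (X Y : A) : f.map (0 : X ⟶ Y) = 0 := by
  obtain ⟨I, e, m, w, hfac, -, -⟩ := hf _ (EA.split_mem X Y)
  have hsnd : f.map biprod.snd = e ≫ m := hfac
  rw [show (0 : X ⟶ Y) = biprod.inl ≫ biprod.snd by simp, f.map_comp, hsnd, reassoc_of% w,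
    zero_comp]

lemma preservesZeroMorphisms (hf : LeftExactOn EA EB f) : f.PreservesZeroMorphisms :=
  ⟨hf.map_zero⟩

lemma map_mem_of_isSplitEpi [f.PreservesZeroMorphisms] (hf : LeftExactOn EA EB f)
    {S : ShortComplex A} (hS : S ∈ EA.sequences) [IsSplitEpi (f.map S.g)] :
    S.map f ∈ EB.sequences := by
  obtain ⟨I, e, m, w, hfac, hm, he⟩ := hf S hS
  have : IsSplitEpi m := ⟨⟨⟨section_ (f.map S.g) ≫ e, by simp [← hfac]⟩⟩⟩
  have : IsIso m := isIso_of_mono_of_isSplitEpi m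
  exact EB.iso_closed _ he _
    (ShortComplex.isoMk (Iso.refl _) (Iso.refl _) (asIso m : I ≅ f.obj S.X₃)
      ((Category.id_comp _).trans (Category.comp_id _).symm)
      ((Category.id_comp _).trans hfac))

lemma map_split_mem [f.PreservesZeroMorphisms] (hf : LeftExactOn EA EB f) (X Y : A) :
    (ShortComplex.mk (biprod.inl : X ⟶ X ⊞ Y) biprod.snd biprod.inl_snd).map f
      ∈ EB.sequences :=
  have : IsSplitEpi (f.map (biprod.snd : X ⊞ Y ⟶ Y)) :=
    ⟨⟨⟨f.map biprod.inr, by rw [← f.map_comp, biprod.inr_snd, f.map_id]⟩⟩⟩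
  hf.map_mem_of_isSplitEpi (EA.split_mem X Y)

lemma additive (hf : LeftExactOn EA EB f) : f.Additive := by
  have := hf.preservesZeroMorphisms
  have : PreservesBinaryBiproducts f := ⟨fun {X Y} => by
    have hb := BinaryBicone.isBilimitOfKernelInl (f.mapBinaryBicone (BinaryBiproduct.bicone X Y))
      (EB.isKernel _ (hf.map_split_mem X Y)).some
    have : IsSplitEpi (f.biprodComparison' X Y) :=
      ⟨⟨⟨f.biprodComparison X Y, by
        rw [Functor.biprodComparison, Functor.biprodComparison', biprod.lift_desc]
        exact IsBilimit.binary_total hb⟩⟩⟩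
    exact preservesBinaryBiproduct_of_epi_biprodComparison' f⟩
  exact Functor.additive_of_preservesBinaryBiproducts f

lemma mem_Sf_of_isDeflation (hB : WeaklyIdemComplete B) (hf : LeftExactOn EA EB f)
    {S : ShortComplex A} (hS : S ∈ EA.sequences) (hg : EB.IsDeflation (f.map S.g)) :
    S ∈ Sf EA EB f := by
  obtain ⟨I, e, m, w, hfac, hm, he⟩ := hf S hS
  have : IsIso m :=
    isIso_of_mono_of_isDeflation (isDeflation_of_isDeflation_comp hB e (hfac ▸ hg))
  refine ⟨hS, by rw [hfac, reassoc_of% w, zero_comp], EB.iso_closed _ he _ ?_⟩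
  exact ShortComplex.isoMk (Iso.refl _) (Iso.refl _) (asIso m) (by simp) (by simp [hfac])

end LeftExactOn

lemma isPullback_map_of_mem_Sf [f.Additive] {P X Y Z : A}
    {fst : P ⟶ X} {snd : P ⟶ Y} {g₁ : X ⟶ Z} {g₂ : Y ⟶ Z} (sq : CommSq fst snd g₁ g₂)
    (h : sq.shortComplex' ∈ Sf EA EB f) :
    IsPullback (f.map fst) (f.map snd) (f.map g₁) (f.map g₂) := by
  have := preservesBinaryBiproducts_of_preservesBiproducts f
  have hsq := sq.map f
  have hmem : hsq.shortComplex' ∈ EB.sequences := by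
    refine EB.iso_closed _ (mem_Sf_iff.1 h).2 _ (ShortComplex.isoMk (Iso.refl _)
      (f.mapBiprod X Y) (Iso.refl _) ?_ ?_)
    · exact (Category.id_comp _).trans (biprod.map_lift_mapBiprod f X Y fst snd).symm
    · have := biprod.mapBiprod_hom_desc f X Y g₁ (-g₂)
      rw [f.map_neg] at this
      exact this.trans (Category.comp_id _).symm
  exact IsPullback.of_isLimit' hsq
    (hsq.isLimitEquivIsLimitKernelFork.symm (EB.isKernel _ hmem).some)

end LeftExact

namespace Sf

open ExactStructure

variable {EA : ExactStructure A} {EB : ExactStructure B} {f : A ⥤ B}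

lemma iso_closed [f.PreservesZeroMorphisms] {S S' : ShortComplex A} (hS : S ∈ Sf EA EB f)
    (e : S ≅ S') : S' ∈ Sf EA EB f :=
  mem_Sf_iff.2 ⟨EA.iso_closed S hS.1 S' e,
    EB.iso_closed _ (mem_Sf_iff.1 hS).2 _ (f.mapShortComplex.mapIso e)⟩

lemma split_mem [f.PreservesZeroMorphisms] (hf : LeftExactOn EA EB f) (X Y : A) :
    ShortComplex.mk (biprod.inl : X ⟶ X ⊞ Y) biprod.snd biprod.inl_snd ∈ Sf EA EB f :=
  mem_Sf_iff.2 ⟨EA.split_mem X Y, hf.map_split_mem X Y⟩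

lemma infl_comp (hB : WeaklyIdemComplete B) (hf : LeftExactOn EA EB f) {X Y Z : A}
    (i₁ : X ⟶ Y) (i₂ : Y ⟶ Z)
    (h₁ : ∃ (W : A) (q : Y ⟶ W) (w : i₁ ≫ q = 0), ShortComplex.mk i₁ q w ∈ Sf EA EB f)
    (h₂ : ∃ (W : A) (q : Z ⟶ W) (w : i₂ ≫ q = 0), ShortComplex.mk i₂ q w ∈ Sf EA EB f) :
    ∃ (W : A) (q : Z ⟶ W) (w : (i₁ ≫ i₂) ≫ q = 0),
      ShortComplex.mk (i₁ ≫ i₂) q w ∈ Sf EA EB f := by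
  obtain ⟨W₁, q₁, w₁, hσ₁⟩ := h₁
  obtain ⟨W₂, q₂, w₂, hσ₂⟩ := h₂
  obtain ⟨W, q, w, hT⟩ := EA.infl_comp i₁ i₂ ⟨W₁, q₁, w₁, hσ₁.1⟩ ⟨W₂, q₂, w₂, hσ₂.1⟩
  refine ⟨W, q, w, hf.mem_Sf_of_isDeflation hB hT ?_⟩
  obtain ⟨π, hπ : q ≫ π = q₂⟩ :=
    CokernelCofork.IsColimit.desc' (EA.isCokernel _ hT).some q₂ (by simp [w₂])
  obtain ⟨κ, hκ : q₁ ≫ κ = i₂ ≫ q⟩ :=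
    CokernelCofork.IsColimit.desc' (EA.isCokernel _ hσ₁.1).some (i₂ ≫ q) (by simpa using w)
  have := epi_g hσ₁.1
  have wκπ : κ ≫ π = 0 := by rw [← cancel_epi q₁, reassoc_of% hκ, hπ, w₂, comp_zero]
  have hqπ : EB.IsDeflation (f.map q ≫ f.map π) := by
    rw [← f.map_comp, hπ]
    exact isDeflation_map_g_of_mem_Sf hσ₂
  obtain ⟨-, _, hN⟩ := hf.mem_Sf_of_isDeflation hB (mem_noether hσ₁.1 hσ₂.1 hT hκ hπ wκπ)
    (isDeflation_of_isDeflation_comp hB _ hqπ)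
  obtain ⟨I, e, m, we, hfac, -, he⟩ := hf _ hT
  obtain ⟨j, hj : f.map q₁ ≫ j = f.map i₂ ≫ e⟩ :=
    CokernelCofork.IsColimit.desc' (EB.isCokernel _ hσ₁.2.2).some (f.map i₂ ≫ e)
      (by simpa using we)
  have := epi_g hσ₁.2.2
  rw [hfac]
  refine (isDeflation_g he).comp
    (isDeflation_of_kernel_and_map_factor hB (EB.isKernel _ hN).some hqπ (j := j) ?_ hfac.symm)
  change j ≫ m = f.map κ
  have hfac' : e ≫ m = f.map q := hfac.symm
  rw [← cancel_epi (f.map q₁), reassoc_of% hj, hfac', ← f.map_comp, ← f.map_comp, hκ]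

lemma defl_comp (hB : WeaklyIdemComplete B) (hf : LeftExactOn EA EB f) {X Y Z : A}
    (g₁ : X ⟶ Y) (g₂ : Y ⟶ Z)
    (h₁ : ∃ (W : A) (i : W ⟶ X) (w : i ≫ g₁ = 0), ShortComplex.mk i g₁ w ∈ Sf EA EB f)
    (h₂ : ∃ (W : A) (i : W ⟶ Y) (w : i ≫ g₂ = 0), ShortComplex.mk i g₂ w ∈ Sf EA EB f) :
    ∃ (W : A) (i : W ⟶ X) (w : i ≫ (g₁ ≫ g₂) = 0),
      ShortComplex.mk i (g₁ ≫ g₂) w ∈ Sf EA EB f := by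
  obtain ⟨K₁, i₁, w₁, hσ₁⟩ := h₁
  obtain ⟨K₂, i₂, w₂, hσ₂⟩ := h₂
  obtain ⟨K, i, w, hσ⟩ := EA.defl_comp g₁ g₂ ⟨K₁, i₁, w₁, hσ₁.1⟩ ⟨K₂, i₂, w₂, hσ₂.1⟩
  refine ⟨K, i, w, hf.mem_Sf_of_isDeflation hB hσ ?_⟩
  exact f.map_comp g₁ g₂ ▸
    (isDeflation_map_g_of_mem_Sf hσ₁).comp (isDeflation_map_g_of_mem_Sf hσ₂)

lemma pushout_ex (hB : WeaklyIdemComplete B) (hf : LeftExactOn EA EB f) {S : ShortComplex A}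
    (hS : S ∈ Sf EA EB f) (A₀ : A) (a : S.X₁ ⟶ A₀) :
    ∃ S' ∈ Sf EA EB f, ∃ (φ : S ⟶ S') (e : A₀ ≅ S'.X₁),
      φ.τ₁ = a ≫ e.hom ∧ IsIso φ.τ₃ ∧ IsPushout S.f φ.τ₁ φ.τ₂ S'.f := by
  obtain ⟨S', hS', φ, e, hτ₁, hτ₃, hpo⟩ := EA.pushout_ex S hS.1 A₀ a
  refine ⟨S', hf.mem_Sf_of_isDeflation hB hS' ?_, φ, e, hτ₁, hτ₃, hpo⟩
  refine isDeflation_of_isDeflation_comp hB (f.map φ.τ₂) ?_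
  rw [← f.map_comp, φ.comm₂₃, f.map_comp]
  exact (isDeflation_map_g_of_mem_Sf hS).comp_isIso _

lemma pullback_ex [f.Additive] (hB : WeaklyIdemComplete B) (hf : LeftExactOn EA EB f)
    {S : ShortComplex A} (hS : S ∈ Sf EA EB f) (A₀ : A) (c : A₀ ⟶ S.X₃) :
    ∃ S' ∈ Sf EA EB f, ∃ (φ : S' ⟶ S) (e : S'.X₃ ≅ A₀),
      φ.τ₃ = e.hom ≫ c ∧ IsIso φ.τ₁ ∧ IsPullback S'.g φ.τ₂ φ.τ₃ S.g := by
  have := preservesBinaryBiproducts_of_preservesBiproducts f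
  obtain ⟨S', hS', φ, e, hτ₃, hτ₁, hpb⟩ := EA.pullback_ex S hS.1 A₀ c
  refine ⟨S', hf.mem_Sf_of_isDeflation hB hS' ?_, φ, e, hτ₃, hτ₁, hpb⟩
  have hfg := isDeflation_map_g_of_mem_Sf hS
  have hδ : EA.IsDeflation (biprod.desc S.g (-φ.τ₃)) := (isDeflation_g hS.1).biprod_desc _
  have hfδ : EB.IsDeflation (f.map (biprod.desc S.g (-φ.τ₃))) := by
    rw [← biprod.mapBiprod_hom_desc]
    exact (hfg.biprod_desc _).isIso_comp _
  have hK := hf.mem_Sf_of_isDeflation hB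
    (mem_of_isLimit_kernelFork hδ hpb.flip.isLimitKernelFork) hfδ
  exact hfg.of_isPullback (isPullback_map_of_mem_Sf hpb.flip.toCommSq hK).flip

end Sf

/-- If `f : A → B` is a left exact functor between exact categories and `B` is weakly
idempotent complete, then `S_f` is an exact structure on `A`. -/
theorem Sf_exactStructure_of_leftExact
    (EA : ExactStructure A) (EB : ExactStructure B) (f : A ⥤ B)
    (hB : WeaklyIdemComplete B) (hf : LeftExactOn EA EB f) :
    ∃ ES : ExactStructure A, ES.sequences = Sf EA EB f := by
  have := hf.additive
  exact ⟨⟨Sf EA EB f, fun S hS => EA.isKernel S hS.1, fun S hS => EA.isCokernel S hS.1,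
    fun _ hS _ e => Sf.iso_closed hS e, Sf.split_mem hf, Sf.infl_comp hB hf, Sf.defl_comp hB hf,
    fun _ hS => Sf.pushout_ex hB hf hS, fun _ hS => Sf.pullback_ex hB hf hS⟩, rfl⟩
end

section
/- Let R be a commutative discrete valuation ring with maximal ideal P. The Prüfer module R_{P^∞} = colim (R/P → R/P² → R/P³ → ⋯), with transition maps given by multiplication by a uniformizer, is an injective R-module, and together with the fraction field Q(R) it gives exactly the indecomposable injective R-modules up to isomorphism. -/
open CategoryTheory CategoryTheory.Limits

noncomputable section

variable (R : Type) [CommRing R] [IsDomain R] [IsDiscreteValuationRing R]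

/-- The maximal ideal of the DVR `R`. -/
abbrev P : Ideal R := IsLocalRing.maximalIdeal R

/-- The transition map `R/P^(n+1) → R/P^(n+2)` induced by multiplication with `p`. -/
def transition (p : R) (hp : P R = Ideal.span {p}) (n : ℕ) :
    ModuleCat.of R (R ⧸ (P R ^ (n + 1))) ⟶ ModuleCat.of R (R ⧸ (P R ^ (n + 2))) :=
  ModuleCat.ofHom <| Submodule.mapQ (P R ^ (n + 1)) (P R ^ (n + 2)) (LinearMap.lsmul R R p)
    (by
      intro x hx
      simp only [Submodule.mem_comap, LinearMap.lsmul_apply]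
      have hpP : p ∈ P R := by
        rw [hp]; exact Ideal.subset_span rfl
      have : p * x ∈ P R * P R ^ (n + 1) := Ideal.mul_mem_mul hpP hx
      rwa [← pow_succ'] at this)

/-- The diagram `R/P → R/P² → R/P³ → ⋯` with transition maps multiplication by `p`. -/
def pruferDiagram (p : R) (hp : P R = Ideal.span {p}) : ℕ ⥤ ModuleCat R :=
  Functor.ofSequence (transition R p hp)

/-- The Prüfer module `R_{P^∞} = colim (R/P → R/P² → ⋯)`. -/
def prufer (p : R) (hp : P R = Ideal.span {p}) : ModuleCat R :=
  colimit (pruferDiagram R p hp)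

/-- An `R`-module is indecomposable if it is nonzero and any direct sum decomposition
has a trivial factor. -/
def IsIndecomposableMod (M : Type) [AddCommGroup M] [Module R M] : Prop :=
  ¬ Subsingleton M ∧
    ∀ (N L : Type) (_ : AddCommGroup N) (_ : Module R N) (_ : AddCommGroup L)
      (_ : Module R L), Nonempty (M ≃ₗ[R] (N × L)) → Subsingleton N ∨ Subsingleton L

/-!
Over a DVR, Baer's criterion only has to be checked on the principal ideals `(u p^k)`, so a module
is injective as soon as it is `p`-divisible; `R_{P^∞}` and `Q(R)` are. Both are uniform (any two
nonzero elements have a common nonzero multiple): in `R_{P^∞}` every nonzero element has a multiple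
equal to the class `e` of `1 ∈ R/P`, and in `Q(R)` this is clearing denominators. Uniform modules
are indecomposable.

Conversely let `M` be injective and indecomposable, and let `N` be `R_{P^∞}` if `M` has nonzero
`p`-torsion and `Q(R)` otherwise, with `e` the class of `1 ∈ R/P`, resp. `1 ∈ Q(R)`. Choose a
nonzero `x ∈ M`, killed by `p` in the first case; then `x` and `e` have the same annihilator (`P`,
resp. `0`), so by injectivity of `M` the map `R e → M`, `e ↦ x`, extends to `N → M`. This
extension is injective because `N` is uniform, hence split because `N` is injective, hence onto
because `M` is indecomposable.
-/

open Ideal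

universe v

def IsUniformMod (R N : Type*) [CommRing R] [AddCommGroup N] [Module R N] : Prop :=
  ∀ z w : N, z ≠ 0 → w ≠ 0 → ∃ c d : R, c • z = d • w ∧ c • z ≠ 0

section Uniform

variable {R : Type*} [CommRing R] {M N : Type v} [AddCommGroup M] [Module R M]
  [AddCommGroup N] [Module R N]

theorem IsUniformMod.of_forall_exists_smul_eq {e : N} (he : e ≠ 0)
    (h : ∀ z : N, z ≠ 0 → ∃ c : R, c • z = e) : IsUniformMod R N := by
  intro z w hz hw
  obtain ⟨c, hc⟩ := h z hz
  obtain ⟨d, hd⟩ := h w hw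
  exact ⟨c, d, hc.trans hd.symm, hc ▸ he⟩

theorem IsUniformMod.injective_of_torsionOf_le (hN : IsUniformMod R N) {φ : N →ₗ[R] M}
    {e : N} (he : e ≠ 0) (h : torsionOf R M (φ e) ≤ torsionOf R N e) :
    Function.Injective φ := by
  refine (injective_iff_map_eq_zero φ).2 fun z hz => ?_
  by_contra hz0
  obtain ⟨c, d, hcd, hc⟩ := hN z e hz0 he
  refine hc (hcd ▸ (mem_torsionOf_iff _ _).1 (h ?_))
  rw [mem_torsionOf_iff, ← map_smul, ← hcd, map_smul, hz, smul_zero]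

theorem Module.Injective.exists_linearMap_apply_eq [Module.Injective R M] {e : N} {x : M}
    (h : torsionOf R N e ≤ torsionOf R M x) : ∃ φ : N →ₗ[R] M, φ e = x := by
  let g : (R ∙ e) →ₗ[R] M := (Submodule.liftQ _ (LinearMap.toSpanSingleton R M x) h) ∘ₗ
    (quotTorsionOfEquivSpanSingleton R N e).symm.toLinearMap
  obtain ⟨φ, hφ⟩ := Module.Injective.out (R ∙ e).subtype Subtype.val_injective g
  have hmk : (quotTorsionOfEquivSpanSingleton R N e).symm ⟨e, Submodule.mem_span_singleton_self e⟩
      = Submodule.Quotient.mk 1 := by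
    rw [LinearEquiv.symm_apply_eq, quotTorsionOfEquivSpanSingleton_apply_mk, one_smul]
  refine ⟨φ, (hφ ⟨e, Submodule.mem_span_singleton_self e⟩).trans ?_⟩
  simp only [g, LinearMap.coe_comp, Function.comp_apply, LinearEquiv.coe_coe, hmk]
  exact one_smul R x

end Uniform

section Indecomposable

variable {R : Type} [CommRing R] {M N : Type} [AddCommGroup M] [Module R M]
  [AddCommGroup N] [Module R N]

theorem IsUniformMod.isIndecomposableMod [Nontrivial N] (hN : IsUniformMod R N) :
    IsIndecomposableMod R N := by
  refine ⟨not_subsingleton N, fun A B _ _ _ _ ⟨f⟩ => ?_⟩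
  rw [or_iff_not_and_not, not_subsingleton_iff_nontrivial, not_subsingleton_iff_nontrivial]
  rintro ⟨hA, hB⟩
  obtain ⟨a, ha⟩ := exists_ne (0 : A)
  obtain ⟨b, hb⟩ := exists_ne (0 : B)
  obtain ⟨c, d, hcd, hc⟩ := hN (f.symm (a, 0)) (f.symm (0, b))
    (by simpa using ha) (by simpa using hb)
  have hca : c • a = 0 := by simpa using congr_arg (fun z => (f z).1) hcd
  exact hc (by rw [← map_smul, Prod.smul_mk, hca, smul_zero, Prod.mk_zero_zero, map_zero])

theorem IsIndecomposableMod.bijective_of_injective [Module.Injective R N] [Nontrivial N]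
    (hM : IsIndecomposableMod R M) {φ : N →ₗ[R] M} (hφ : Function.Injective φ) :
    Function.Bijective φ := by
  obtain ⟨σ, hσ⟩ := Module.Injective.out φ hφ LinearMap.id
  have hcompl : IsCompl (LinearMap.range φ) (LinearMap.ker (φ.rangeRestrict ∘ₗ σ)) :=
    LinearMap.isCompl_of_proj fun ⟨_, z, rfl⟩ => by ext; simp [hσ]
  refine ⟨hφ, LinearMap.range_eq_top.1 ?_⟩
  rcases hM.2 _ _ _ _ _ _ ⟨(Submodule.prodEquivOfIsCompl _ _ hcompl).symm⟩ with h | h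
  · exact (not_subsingleton N (LinearEquiv.ofInjective φ hφ).toEquiv.subsingleton).elim
  · rw [Submodule.eq_bot_of_subsingleton (p := LinearMap.ker _)] at hcompl
    exact eq_top_of_isCompl_bot hcompl

theorem IsIndecomposableMod.nonempty_linearEquiv_of_torsionOf_eq [Module.Injective R M]
    [Module.Injective R N] (hM : IsIndecomposableMod R M) (hN : IsUniformMod R N) {x : M} {e : N}
    (he : e ≠ 0) (h : torsionOf R M x = torsionOf R N e) : Nonempty (M ≃ₗ[R] N) := by
  obtain ⟨φ, rfl⟩ := Module.Injective.exists_linearMap_apply_eq h.ge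
  have : Nontrivial N := nontrivial_of_ne e 0 he
  exact ⟨(LinearEquiv.ofBijective φ
    (hM.bijective_of_injective (hN.injective_of_torsionOf_le he h.le))).symm⟩

end Indecomposable

theorem Module.Baer.of_forall_exists_smul_eq {R M : Type*} [CommRing R] [IsPrincipalIdealRing R]
    [AddCommGroup M] [Module R M] (h : ∀ a : R, a ≠ 0 → ∀ m : M, ∃ y, a • y = m) :
    Module.Baer R M := by
  intro I g
  let a := Submodule.IsPrincipal.generator I
  have ha : a ∈ I := Submodule.IsPrincipal.generator_mem I
  obtain ⟨y, hy⟩ : ∃ y : M, a • y = g ⟨a, ha⟩ := by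
    by_cases ha0 : a = 0
    · exact ⟨0, by rw [smul_zero, ← map_zero g]; exact congr_arg g (Subtype.ext ha0.symm)⟩
    · exact h a ha0 _
  refine ⟨LinearMap.toSpanSingleton R M y, fun x hx => ?_⟩
  obtain ⟨r, rfl⟩ := (Submodule.IsPrincipal.mem_iff_eq_smul_generator I).1 hx
  rw [LinearMap.toSpanSingleton_apply, smul_assoc, hy, ← map_smul]
  rfl

section FractionField

variable {R K : Type*} [CommRing R] [IsDomain R] [Field K] [Algebra R K] [IsFractionRing R K]

theorem IsFractionRing.isUniformMod : IsUniformMod R K := by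
  intro z w hz hw
  obtain ⟨a, b, hb, hab⟩ := IsFractionRing.div_surjective R (w / z)
  have hb0 : algebraMap R K b ≠ 0 := IsFractionRing.to_map_ne_zero_of_mem_nonZeroDivisors hb
  have hab' : a • z = b • w := by
    rw [div_eq_div_iff hb0 hz] at hab
    rw [Algebra.smul_def, Algebra.smul_def]
    linear_combination hab
  exact ⟨a, b, hab', by rw [hab', Algebra.smul_def]; exact mul_ne_zero hb0 hw⟩

theorem IsFractionRing.module_injective [IsPrincipalIdealRing R] : Module.Injective R K :=
  (Module.Baer.of_forall_exists_smul_eq fun a ha m => ⟨(algebraMap R K a)⁻¹ * m, by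
    rw [Algebra.smul_def, ← mul_assoc, mul_inv_cancel₀, one_mul]
    exact IsFractionRing.to_map_ne_zero_of_mem_nonZeroDivisors
      (mem_nonZeroDivisors_of_ne_zero ha)⟩).injective

end FractionField

section DVR

variable {R : Type*} [CommRing R] [IsDomain R] [IsDiscreteValuationRing R] {p : R}
  {M : Type*} [AddCommGroup M] [Module R M]

theorem Irreducible.exists_mul_eq_pow_of_not_dvd (hp : Irreducible p) {r : R} {n : ℕ}
    (hr : ¬ p ^ (n + 1) ∣ r) : ∃ c, c * r = p ^ n := by
  have hr0 : r ≠ 0 := by rintro rfl; exact hr (dvd_zero _)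
  obtain ⟨a, u, rfl⟩ := IsDiscreteValuationRing.eq_unit_mul_pow_irreducible hr0 hp
  have han : a ≤ n := by
    by_contra! han
    exact hr (Dvd.dvd.mul_left (pow_dvd_pow p han) _)
  refine ⟨↑u⁻¹ * p ^ (n - a), ?_⟩
  calc ↑u⁻¹ * p ^ (n - a) * (↑u * p ^ a) = (↑u⁻¹ * ↑u) * (p ^ (n - a) * p ^ a) := by ring
    _ = p ^ n := by rw [Units.inv_mul, one_mul, ← pow_add, Nat.sub_add_cancel han]

theorem Irreducible.injective_of_forall_exists_smul_eq (hp : Irreducible p)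
    (h : ∀ m : M, ∃ y, p • y = m) : Module.Injective R M := by
  have hpow : ∀ (n : ℕ) (m : M), ∃ y, p ^ n • y = m := by
    intro n
    induction n with
    | zero => exact fun m => ⟨m, by rw [pow_zero, one_smul]⟩
    | succ n ih =>
      intro m
      obtain ⟨y, rfl⟩ := ih m
      obtain ⟨z, rfl⟩ := h y
      exact ⟨z, by rw [pow_succ, mul_smul]⟩
  refine (Module.Baer.of_forall_exists_smul_eq fun a ha m => ?_).injective
  obtain ⟨n, u, rfl⟩ := IsDiscreteValuationRing.eq_unit_mul_pow_irreducible ha hp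
  obtain ⟨y, hy⟩ := hpow n (u⁻¹ • m)
  exact ⟨y, by rw [mul_smul, hy, ← Units.smul_def, smul_inv_smul]⟩

theorem Irreducible.torsionOf_eq_maximalIdeal (hp : Irreducible p) {x : M} (hx : x ≠ 0)
    (hpx : p • x = 0) : torsionOf R M x = IsLocalRing.maximalIdeal R := by
  have hle : IsLocalRing.maximalIdeal R ≤ torsionOf R M x := by
    rw [(IsDiscreteValuationRing.irreducible_iff_uniformizer p).1 hp, span_singleton_le_iff_mem,
      mem_torsionOf_iff]
    exact hpx
  exact ((IsLocalRing.maximalIdeal.isMaximal R).eq_of_le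
    ((torsionOf_eq_top_iff R x).not.2 hx) hle).symm

theorem Irreducible.torsionOf_eq_bot (hp : Irreducible p) (h : ∀ y : M, p • y = 0 → y = 0)
    {x : M} (hx : x ≠ 0) : torsionOf R M x = ⊥ := by
  have hpow : ∀ (n : ℕ) (y : M), p ^ n • y = 0 → y = 0 := by
    intro n
    induction n with
    | zero => exact fun y hy => by rwa [pow_zero, one_smul] at hy
    | succ n ih => exact fun y hy => h y (ih _ (by rwa [← mul_smul, ← pow_succ]))
  refine (Submodule.eq_bot_iff _).2 fun r hr => ?_
  by_contra hr0
  obtain ⟨n, u, rfl⟩ := IsDiscreteValuationRing.eq_unit_mul_pow_irreducible hr0 hp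
  rw [mem_torsionOf_iff, mul_smul, ← Units.smul_def, smul_eq_zero_iff_eq] at hr
  exact hx (hpow n x hr)

end DVR

theorem CategoryTheory.Functor.mono_ofSequence_map {C : Type*} [Category C] {X : ℕ → C}
    (f : ∀ n, X n ⟶ X (n + 1)) [hf : ∀ n, Mono (f n)] {i j : ℕ} (φ : i ⟶ j) :
    Mono ((Functor.ofSequence f).map φ) := by
  suffices h : ∀ j (hij : i ≤ j), Mono ((Functor.ofSequence f).map (homOfLE hij)) from
    h j (leOfHom φ)
  intro j hij
  induction j, hij using Nat.le_induction with
  | base => rw [Subsingleton.elim (homOfLE _) (𝟙 i), Functor.map_id]; infer_instance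
  | succ n hin ih =>
    rw [← homOfLE_comp hin n.le_succ, Functor.map_comp, Functor.ofSequence_map_homOfLE_succ]
    exact @mono_comp _ _ _ _ _ _ ih _ (hf n)

theorem irreducible_of_P_eq_span {p : R} (hp : P R = Ideal.span {p}) : Irreducible p :=
  (IsDiscreteValuationRing.irreducible_iff_uniformizer p).2 hp

theorem mem_P_pow_iff_dvd {p : R} (hp : P R = Ideal.span {p}) {k : ℕ} {r : R} :
    r ∈ P R ^ k ↔ p ^ k ∣ r := by
  rw [hp, Ideal.span_singleton_pow, Ideal.mem_span_singleton]

section Prufer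

variable (p : R) (hp : P R = Ideal.span {p})

theorem transition_injective (n : ℕ) : Function.Injective (transition R p hp n) := by
  refine (injective_iff_map_eq_zero (transition R p hp n).hom).2 fun x hx => ?_
  obtain ⟨r, rfl⟩ := Submodule.Quotient.mk_surjective _ x
  change Submodule.Quotient.mk (p * r) = (0 : R ⧸ P R ^ (n + 2)) at hx
  rw [Submodule.Quotient.mk_eq_zero, mem_P_pow_iff_dvd R hp, pow_succ',
    mul_dvd_mul_iff_left (irreducible_of_P_eq_span R hp).ne_zero] at hx
  rwa [Submodule.Quotient.mk_eq_zero, mem_P_pow_iff_dvd R hp]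

def pruferι (n : ℕ) : R ⧸ P R ^ (n + 1) →ₗ[R] prufer R p hp :=
  (colimit.ι (pruferDiagram R p hp) n).hom

theorem pruferι_injective (n : ℕ) : Function.Injective (pruferι R p hp n) := by
  have : ∀ n, Mono (transition R p hp n) := fun n =>
    (ModuleCat.mono_iff_injective _).2 (transition_injective R p hp n)
  have : ∀ i j (φ : i ⟶ j), Mono ((pruferDiagram R p hp).map φ) := fun _ _ φ =>
    Functor.mono_ofSequence_map _ φ
  exact (ModuleCat.mono_iff_injective _).1
    (IsColimit.mono_ι_app_of_isFiltered (colimit.isColimit (pruferDiagram R p hp)) n)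

theorem pruferι_succ_mk_mul (n : ℕ) (r : R) :
    pruferι R p hp (n + 1) (Submodule.Quotient.mk (p * r)) =
      pruferι R p hp n (Submodule.Quotient.mk r) := by
  have h := colimit.w (pruferDiagram R p hp) (homOfLE n.le_succ)
  rw [pruferDiagram, Functor.ofSequence_map_homOfLE_succ] at h
  exact congr_arg (fun g => g.hom (Submodule.Quotient.mk r)) h

theorem exists_pruferι_mk_eq (x : prufer R p hp) :
    ∃ n r, pruferι R p hp n (Submodule.Quotient.mk r) = x := by
  obtain ⟨n, y, rfl⟩ := Concrete.colimit_exists_rep (pruferDiagram R p hp) x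
  obtain ⟨r, rfl⟩ := Submodule.Quotient.mk_surjective _ y
  exact ⟨n, r, rfl⟩

/-- Under `R_{P^∞} ≅ Q(R)/R` this is the class of `1/p`. -/
def pruferGen : prufer R p hp :=
  pruferι R p hp 0 (Submodule.Quotient.mk 1)

theorem pruferGen_ne_zero : pruferGen R p hp ≠ 0 := by
  rw [pruferGen, Ne, map_eq_zero_iff _ (pruferι_injective R p hp 0),
    Submodule.Quotient.mk_eq_zero, mem_P_pow_iff_dvd R hp, pow_one]
  exact (irreducible_of_P_eq_span R hp).not_isUnit ∘ isUnit_of_dvd_one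

theorem p_smul_pruferGen : p • pruferGen R p hp = 0 := by
  rw [pruferGen, ← map_smul, ← Submodule.Quotient.mk_smul, smul_eq_mul, mul_one,
    (Submodule.Quotient.mk_eq_zero _).2 ((mem_P_pow_iff_dvd R hp).2 (by rw [pow_one])), map_zero]

theorem torsionOf_pruferGen : torsionOf R (prufer R p hp) (pruferGen R p hp) = P R :=
  (irreducible_of_P_eq_span R hp).torsionOf_eq_maximalIdeal (pruferGen_ne_zero R p hp)
    (p_smul_pruferGen R p hp)

theorem pruferι_mk_pow (n : ℕ) :
    pruferι R p hp n (Submodule.Quotient.mk (p ^ n)) = pruferGen R p hp := by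
  induction n with
  | zero => rw [pow_zero, pruferGen]
  | succ n ih => rw [← ih, ← pruferι_succ_mk_mul R p hp n, ← pow_succ']

theorem exists_smul_eq_pruferGen {z : prufer R p hp} (hz : z ≠ 0) :
    ∃ c : R, c • z = pruferGen R p hp := by
  obtain ⟨n, r, rfl⟩ := exists_pruferι_mk_eq R p hp z
  have hr : ¬ p ^ (n + 1) ∣ r := fun h => hz (by
    rw [(Submodule.Quotient.mk_eq_zero _).2 ((mem_P_pow_iff_dvd R hp).2 h), map_zero])
  obtain ⟨c, hc⟩ := (irreducible_of_P_eq_span R hp).exists_mul_eq_pow_of_not_dvd hr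
  exact ⟨c, by rw [← map_smul, ← Submodule.Quotient.mk_smul, smul_eq_mul, hc, pruferι_mk_pow]⟩

theorem prufer_isUniformMod : IsUniformMod R (prufer R p hp) :=
  .of_forall_exists_smul_eq (pruferGen_ne_zero R p hp) fun _ => exists_smul_eq_pruferGen R p hp

theorem prufer_injective : Module.Injective R (prufer R p hp) :=
  (irreducible_of_P_eq_span R hp).injective_of_forall_exists_smul_eq fun z => by
    obtain ⟨n, r, rfl⟩ := exists_pruferι_mk_eq R p hp z
    refine ⟨pruferι R p hp (n + 1) (Submodule.Quotient.mk r), ?_⟩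
    rw [← map_smul, ← Submodule.Quotient.mk_smul, smul_eq_mul, pruferι_succ_mk_mul]

end Prufer

/-- The Prüfer module `R_{P^∞}` is an injective `R`-module, and together with the fraction
field `Q(R)` it gives exactly the indecomposable injective `R`-modules up to isomorphism. -/
theorem prufer_injective_and_classification
    (p : R) (hp : P R = Ideal.span {p}) :
    Module.Injective R (prufer R p hp) ∧
    IsIndecomposableMod R (prufer R p hp) ∧
    Module.Injective R (FractionRing R) ∧
    IsIndecomposableMod R (FractionRing R) ∧
    (∀ (M : Type) (_ : AddCommGroup M) (_ : Module R M),
        Module.Injective R M → IsIndecomposableMod R M →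
        Nonempty (M ≃ₗ[R] prufer R p hp) ∨ Nonempty (M ≃ₗ[R] FractionRing R)) := by
  have := prufer_injective R p hp
  have := nontrivial_of_ne _ _ (pruferGen_ne_zero R p hp)
  have : Module.Injective R (FractionRing R) := IsFractionRing.module_injective
  refine ⟨inferInstance, (prufer_isUniformMod R p hp).isIndecomposableMod, inferInstance,
    IsFractionRing.isUniformMod.isIndecomposableMod, fun M _ _ _ hM => ?_⟩
  have hpi := irreducible_of_P_eq_span R hp
  by_cases htf : ∀ y : M, p • y = 0 → y = 0
  · have := not_subsingleton_iff_nontrivial.1 hM.1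
    obtain ⟨x, hx⟩ := exists_ne (0 : M)
    exact .inr (hM.nonempty_linearEquiv_of_torsionOf_eq IsFractionRing.isUniformMod one_ne_zero
      ((hpi.torsionOf_eq_bot htf hx).trans
        ((torsionOf_eq_bot_iff_of_noZeroSMulDivisors R _).2 one_ne_zero).symm))
  · push Not at htf
    obtain ⟨x, hpx, hx⟩ := htf
    exact .inl (hM.nonempty_linearEquiv_of_torsionOf_eq (prufer_isUniformMod R p hp)
      (pruferGen_ne_zero R p hp)
      ((hpi.torsionOf_eq_maximalIdeal hx hpx).trans (torsionOf_pruferGen R p hp).symm))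

end
end

section
/- Let R be a commutative discrete valuation ring with uniformizer p, and let a < b be positive integers with a > 1 and a + b even, s = (a+b)/2. Then there exists a short exact sequence of R-modules 0 → R/P^s → R/P^{a-1} ⊕ R/P^{b+1} → R/P^s → 0; iterating it yields a periodic non-split coresolution, so R/P^s has infinite injective dimension in the exact structure E whose admissible sequences are those σ with Hom_R(σ, R/P^ℓ) exact for all ℓ ∉ (a−1, b+1). -/
/-!
Write `m = a - 1` and `t = s - m`, so that `m + t = s` and `s + t = b + 1`. The sequence is
`x ↦ (x, p^t x)` followed by `(y, z) ↦ p^t y - z`; exactness is divisibility bookkeeping that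
only needs `p` to be a non-zero-divisor. It does not split: a retraction `r` sends `(1, 0)`,
which is killed by `p^m`, into `p^t · R/(p^s)`; then so is `1 = r (1, 0) + p^t r (0, 1)`,
which forces `p` to be a unit.
-/

namespace SpanPowQuot

variable {R : Type*} [CommRing R] (p : R)

local notation "mk" => Submodule.Quotient.mk

theorem span_pow_le_span_pow {k l : ℕ} (h : l ≤ k) :
    Ideal.span {p ^ k} ≤ Ideal.span {p ^ l} :=
  Ideal.span_singleton_le_span_singleton.mpr (pow_dvd_pow p h)

theorem mk_eq_zero_iff_dvd {k : ℕ} {x : R} :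
    (mk x : R ⧸ Ideal.span {p ^ k}) = 0 ↔ p ^ k ∣ x := by
  rw [Submodule.Quotient.mk_eq_zero, Ideal.mem_span_singleton]

theorem mk_eq_mk_iff_dvd {k : ℕ} {x y : R} :
    (mk x : R ⧸ Ideal.span {p ^ k}) = mk y ↔ p ^ k ∣ x - y := by
  rw [Submodule.Quotient.eq, Ideal.mem_span_singleton]

def mulPow (t : ℕ) {k l : ℕ} (h : l ≤ k + t) :
    R ⧸ Ideal.span {p ^ k} →ₗ[R] R ⧸ Ideal.span {p ^ l} :=
  Submodule.liftQ _ (p ^ t • Submodule.mkQ _) fun x hx => by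
    obtain ⟨c, rfl⟩ := Ideal.mem_span_singleton'.mp hx
    rw [LinearMap.mem_ker, LinearMap.smul_apply, Submodule.mkQ_apply,
      ← Submodule.Quotient.mk_smul, Submodule.Quotient.mk_eq_zero, smul_eq_mul,
      Ideal.mem_span_singleton]
    exact (pow_dvd_pow p h).trans ⟨c, by ring⟩

@[simp]
theorem mulPow_mk (t : ℕ) {k l : ℕ} (h : l ≤ k + t) (x : R) :
    mulPow p t h (mk x) = mk (p ^ t * x) :=
  rfl

theorem exists_eq_mk_pow_mul_of_pow_smul_eq_zero {m s t : ℕ} (hs : m + t = s)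
    (hp : IsLeftRegular p) {q : R ⧸ Ideal.span {p ^ s}} (hq : p ^ m • q = 0) :
    ∃ c, q = mk (p ^ t * c) := by
  subst hs
  obtain ⟨x, rfl⟩ := Submodule.Quotient.mk_surjective _ q
  rw [← Submodule.Quotient.mk_smul, smul_eq_mul, mk_eq_zero_iff_dvd] at hq
  obtain ⟨c, hc⟩ := hq
  exact ⟨c, congrArg mk (hp.pow m (by dsimp only; rw [hc]; ring))⟩

theorem mk_one_ne_mk_pow_mul {s t : ℕ} (hu : ¬IsUnit p) (ht : t ≠ 0) (hts : t ≤ s) (c : R) :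
    (mk 1 : R ⧸ Ideal.span {p ^ s}) ≠ mk (p ^ t * c) := by
  rw [Ne, mk_eq_mk_iff_dvd]
  intro h
  apply hu
  rw [← isUnit_pow_iff ht]
  exact isUnit_of_dvd_one ((dvd_sub_left (dvd_mul_right _ _)).mp ((pow_dvd_pow p hts).trans h))

variable {m s n t : ℕ} (hs : m + t = s) (hn : s + t = n)

def toProd :
    R ⧸ Ideal.span {p ^ s} →ₗ[R] (R ⧸ Ideal.span {p ^ m}) × (R ⧸ Ideal.span {p ^ n}) :=
  (Submodule.factor (span_pow_le_span_pow p (by omega))).prod (mulPow p t hn.ge)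

def ofProd :
    (R ⧸ Ideal.span {p ^ m}) × (R ⧸ Ideal.span {p ^ n}) →ₗ[R] R ⧸ Ideal.span {p ^ s} :=
  (mulPow p t hs.ge).coprod (-Submodule.factor (span_pow_le_span_pow p (by omega)))

@[simp]
theorem toProd_mk (x : R) : toProd p hs hn (mk x) = (mk x, mk (p ^ t * x)) :=
  rfl

@[simp]
theorem ofProd_mk (y z : R) : ofProd p hs hn (mk y, mk z) = mk (p ^ t * y - z) := by
  show mk (p ^ t * y) + -(mk z : R ⧸ Ideal.span {p ^ s}) = _
  rw [← Submodule.Quotient.mk_neg, ← Submodule.Quotient.mk_add, sub_eq_add_neg]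

theorem toProd_injective (hp : IsLeftRegular p) : Function.Injective (toProd p hs hn) := by
  subst hs hn
  rw [← LinearMap.ker_eq_bot, eq_bot_iff]
  intro q hq
  obtain ⟨x, rfl⟩ := Submodule.Quotient.mk_surjective _ q
  rw [LinearMap.mem_ker, toProd_mk, Prod.mk_eq_zero, mk_eq_zero_iff_dvd, mk_eq_zero_iff_dvd] at hq
  obtain ⟨c, hc⟩ := hq.2
  rw [Submodule.mem_bot, mk_eq_zero_iff_dvd]
  exact ⟨c, hp.pow t (by dsimp only; rw [hc]; ring)⟩

theorem ofProd_surjective : Function.Surjective (ofProd p hs hn) := by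
  intro q
  obtain ⟨x, rfl⟩ := Submodule.Quotient.mk_surjective _ q
  exact ⟨(mk 0, mk (-x)), by rw [ofProd_mk, mul_zero, zero_sub, neg_neg]⟩

theorem exact_toProd_ofProd : Function.Exact (toProd p hs hn) (ofProd p hs hn) := by
  subst hs hn
  rintro ⟨y, z⟩
  obtain ⟨y, rfl⟩ := Submodule.Quotient.mk_surjective _ y
  obtain ⟨z, rfl⟩ := Submodule.Quotient.mk_surjective _ z
  rw [ofProd_mk, mk_eq_zero_iff_dvd]
  constructor
  · rintro ⟨w, hw⟩
    refine ⟨mk (y - p ^ m * w), ?_⟩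
    rw [toProd_mk, Prod.mk.injEq, mk_eq_mk_iff_dvd, mk_eq_mk_iff_dvd]
    exact ⟨⟨-w, by ring⟩, ⟨0, by linear_combination hw⟩⟩
  · rintro ⟨x, hx⟩
    obtain ⟨x, rfl⟩ := Submodule.Quotient.mk_surjective _ x
    rw [toProd_mk, Prod.mk.injEq, mk_eq_mk_iff_dvd, mk_eq_mk_iff_dvd] at hx
    obtain ⟨⟨u, hu⟩, ⟨v, hv⟩⟩ := hx
    exact ⟨p ^ t * v - u, by linear_combination hv - p ^ t * hu⟩

theorem not_exists_retraction_toProd (hp : IsLeftRegular p) (hu : ¬IsUnit p) (ht : t ≠ 0) :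
    ¬∃ r, r ∘ₗ toProd p hs hn = LinearMap.id := by
  rintro ⟨r, hr⟩
  have hkill :
      p ^ m • ((mk 1, 0) : (R ⧸ Ideal.span {p ^ m}) × (R ⧸ Ideal.span {p ^ n})) = 0 := by
    rw [Prod.smul_mk, smul_zero, ← Submodule.Quotient.mk_smul,
      (mk_eq_zero_iff_dvd p).mpr (by rw [smul_eq_mul, mul_one]), Prod.mk_zero_zero]
  obtain ⟨c, hc⟩ := exists_eq_mk_pow_mul_of_pow_smul_eq_zero p hs hp
    (q := r (mk 1, 0)) (by rw [← map_smul, hkill, map_zero])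
  obtain ⟨d, hd⟩ := Submodule.Quotient.mk_surjective _ (r (0, mk 1))
  refine mk_one_ne_mk_pow_mul p (s := s) hu ht (by omega) (c + d) ?_
  calc mk 1 = r (toProd p hs hn (mk 1)) := by
        rw [← LinearMap.comp_apply, hr, LinearMap.id_apply]
    _ = r (mk 1, 0) + p ^ t • r (0, mk 1) := by
      rw [← map_smul, ← map_add, toProd_mk, Prod.smul_mk, smul_zero, Prod.mk_add_mk, add_zero,
        zero_add, ← Submodule.Quotient.mk_smul, smul_eq_mul]
    _ = mk (p ^ t * (c + d)) := by
      rw [hc, ← hd, ← Submodule.Quotient.mk_smul, ← Submodule.Quotient.mk_add, smul_eq_mul,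
        mul_add]

end SpanPowQuot

/-- Let `R` be a commutative DVR with uniformizer `p`, and `a < b` positive integers with
`a > 1` and `a + b` even, `s = (a+b)/2`.  Then there is a non-split short exact sequence of
`R`-modules `0 → R/P^s → R/P^(a-1) ⊕ R/P^(b+1) → R/P^s → 0` (the building block of the
periodic coresolution showing that `R/P^s` has infinite injective dimension in the exact
structure determined by the gap `[a,b]`). -/
theorem exists_periodic_nonsplit_ses
    (R : Type) [CommRing R] [IsDomain R] [IsDiscreteValuationRing R]
    (p : R) (hp : IsLocalRing.maximalIdeal R = Ideal.span {p})
    (a b s : ℕ) (ha1 : 1 < a) (hab : a < b) (hs : 2 * s = a + b) :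
    ∃ (f : (R ⧸ (IsLocalRing.maximalIdeal R ^ s)) →ₗ[R]
          ((R ⧸ (IsLocalRing.maximalIdeal R ^ (a - 1))) ×
           (R ⧸ (IsLocalRing.maximalIdeal R ^ (b + 1)))))
      (g : ((R ⧸ (IsLocalRing.maximalIdeal R ^ (a - 1))) ×
           (R ⧸ (IsLocalRing.maximalIdeal R ^ (b + 1)))) →ₗ[R]
          (R ⧸ (IsLocalRing.maximalIdeal R ^ s))),
      Function.Injective f ∧ Function.Surjective g ∧ Function.Exact f g ∧
      ¬ ∃ r, r ∘ₗ f = (LinearMap.id : (R ⧸ (IsLocalRing.maximalIdeal R ^ s)) →ₗ[R] _) := by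
  have hp_irr : Irreducible p := IsDiscreteValuationRing.irreducible_iff_uniformizer p |>.mpr hp
  have hp_reg : IsLeftRegular p := (IsRegular.of_ne_zero hp_irr.ne_zero).left
  have hm : a - 1 + (s - (a - 1)) = s := by omega
  have hn : s + (s - (a - 1)) = b + 1 := by omega
  rw [hp, Ideal.span_singleton_pow, Ideal.span_singleton_pow, Ideal.span_singleton_pow]
  exact ⟨SpanPowQuot.toProd p hm hn, SpanPowQuot.ofProd p hm hn,
    SpanPowQuot.toProd_injective p hm hn hp_reg, SpanPowQuot.ofProd_surjective p hm hn,
    SpanPowQuot.exact_toProd_ofProd p hm hn,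
    SpanPowQuot.not_exists_retraction_toProd p hm hn hp_reg hp_irr.not_isUnit (by omega)⟩
end
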